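/- arXiv:1408.2247 — 8 statements merged into one kernel-verified Lean document; each statement's English description precedes it below -/
import Mathlib

section
/- Let ℓ be a line in E and let p, q, r, s be four points of ℓ, none of which lies on the circle C. If there exists a point x ∈ C with x ∉ ℓ such that I_s (I_r (I_q (I_p x))) = x, then the composition I_s ∘ I_r ∘ I_q ∘ I_p is the identity map of C (i.e., the chain of four chords through p, q, r, s closes for every starting point on C). -/
open Metric

/-- The Euclidean plane. -/
abbrev E2 : Type := EuclideanSpace ℝ (Fin 2)

/-- `I` restricts on the circle `sphere o ρ` to the chord map through `p`:
for every `x` on the circle, `I x` is the point of the circle on the line through `x` and `p`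
such that every point of the circle on that line equals `x` or `I x`. -/
def ChordMap (o : E2) (ρ : ℝ) (p : E2) (I : E2 → E2) : Prop :=
  ∀ x ∈ sphere o ρ, I x ∈ sphere o ρ ∧
    I x ∈ affineSpan ℝ ({x, p} : Set E2) ∧
    ∀ z ∈ sphere o ρ, z ∈ affineSpan ℝ ({x, p} : Set E2) → z = x ∨ z = I x

namespace PorismProof
open Complex
local notation "conj'" => starRingEnd ℂ

noncomputable def mob (p z : ℂ) : ℂ := (z - p) / (conj' p * z - 1)

lemma den_ne {p z : ℂ} (hz : z * conj' z = 1) (hp : p * conj' p ≠ 1) :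
    conj' p * z - 1 ≠ 0 := by
  intro h
  have h1 : conj' p * z = 1 := by linear_combination h
  have h2 : p * conj' z = 1 := by
    have := congrArg conj' h1; simpa using this
  exact hp (by linear_combination (p * conj' z) * h1 + h2 - (p * conj' p) * hz)

lemma mob_unit {p z : ℂ} (hz : z * conj' z = 1) (hp : p * conj' p ≠ 1) :
    mob p z * conj' (mob p z) = 1 := by
  have hd := den_ne hz hp
  have hd' : p * conj' z - 1 ≠ 0 := by
    intro h; apply hd
    have := congrArg conj' h; simpa using this
  rw [mob, map_div₀]
  simp only [map_sub, map_mul, map_one, Complex.conj_conj]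
  rw [div_mul_div_comm, div_eq_one_iff_eq (mul_ne_zero hd hd')]
  linear_combination (1 - p * conj' p) * hz

lemma mob_num {p z : ℂ} (hz : z * conj' z = 1) (hp : p * conj' p ≠ 1) :
    (conj' p * z - 1) * mob p z = z - p := by
  rw [mob, mul_div_cancel₀ _ (den_ne hz hp)]

noncomputable def Tm (p : ℂ) (v : ℂ × ℂ) : ℂ × ℂ :=
  (v.1 - p * v.2, conj' p * v.1 - v.2)

lemma Tm_swap {p z w : ℂ} (k : ℂ) (h1 : z - p = (conj' p * z - 1) * w) :
    Tm p (k * z, k) = (k * (conj' p * z - 1) * w, k * (conj' p * z - 1)) := by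
  simp only [Tm, Prod.mk.injEq]
  exact ⟨by linear_combination k * h1, by ring⟩

lemma Tm_lin (P Q R S : ℂ) (z w : ℂ) :
    Tm S (Tm R (Tm Q (Tm P (z, w)))) =
      ((Tm S (Tm R (Tm Q (Tm P ((1:ℂ), (0:ℂ)))))).1 * z
        + (Tm S (Tm R (Tm Q (Tm P ((0:ℂ), (1:ℂ)))))).1 * w,
       (Tm S (Tm R (Tm Q (Tm P ((1:ℂ), (0:ℂ)))))).2 * z
        + (Tm S (Tm R (Tm Q (Tm P ((0:ℂ), (1:ℂ)))))).2 * w) := by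
  simp only [Tm, Prod.mk.injEq]
  exact ⟨by ring, by ring⟩

lemma Tm_det (P Q R S : ℂ) :
    (Tm S (Tm R (Tm Q (Tm P ((1:ℂ),(0:ℂ)))))).1 * (Tm S (Tm R (Tm Q (Tm P ((0:ℂ),(1:ℂ)))))).2
    - (Tm S (Tm R (Tm Q (Tm P ((0:ℂ),(1:ℂ)))))).1 * (Tm S (Tm R (Tm Q (Tm P ((1:ℂ),(0:ℂ)))))).2
    = (1 - P * conj' P) * (1 - Q * conj' Q) * (1 - R * conj' R) * (1 - S * conj' S) := by
  simp only [Tm]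
  ring

lemma core (P Q R S X E c : ℂ) (hE : conj' E ≠ 0)
    (hPl : P * conj' E - conj' P * E = c)
    (hQl : Q * conj' E - conj' Q * E = c)
    (hRl : R * conj' E - conj' R * E = c)
    (hSl : S * conj' E - conj' S * E = c)
    (hPa : P * conj' P ≠ 1) (hQa : Q * conj' Q ≠ 1)
    (hRa : R * conj' R ≠ 1) (hSa : S * conj' S ≠ 1)
    (hXu : X * conj' X = 1)
    (hXl : X * conj' E - conj' X * E ≠ c)
    (hclose : mob S (mob R (mob Q (mob P X))) = X) :
    ∀ Y, Y * conj' Y = 1 → mob S (mob R (mob Q (mob P Y))) = Y := by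
  obtain ⟨δ, hδ⟩ := IsAlgClosed.exists_pow_nat_eq (k := ℂ)
    (c ^ 2 + 4 * conj' E * E) (n := 2) (by norm_num)
  obtain ⟨α, hαdef⟩ : ∃ t : ℂ, (c + δ) / (2 * conj' E) = t := ⟨_, rfl⟩
  obtain ⟨β, hβdef⟩ : ∃ t : ℂ, (c - δ) / (2 * conj' E) = t := ⟨_, rfl⟩
  have hsum : conj' E * (α + β) = c := by
    rw [← hαdef, ← hβdef]; field_simp; ring
  have hprod : conj' E * (α * β) = -E := by
    rw [← hαdef, ← hβdef]; field_simp; linear_combination (-1) * hδ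
  -- X is distinct from α and β
  have hroot : ∀ γ γ' : ℂ, conj' E * (γ + γ') = c → conj' E * (γ * γ') = -E →
      X ≠ γ := by
    intro γ γ' hs hp h
    apply hXl
    rw [← h] at hs hp
    linear_combination hs - conj' X * hp + conj' E * γ' * hXu
  have hsum' : conj' E * (β + α) = c := by linear_combination hsum
  have hprod' : conj' E * (β * α) = -E := by linear_combination hprod
  have hXα : X ≠ α := hroot α β hsum hprod
  have hXβ : X ≠ β := hroot β α hsum' hprod'
  -- swap identities
  have hswap : ∀ t γ γ' : ℂ, t * conj' E - conj' t * E = c →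
      conj' E * (γ + γ') = c → conj' E * (γ * γ') = -E →
      γ - t = (conj' t * γ - 1) * γ' := by
    intro t γ γ' hlt hs hp
    apply mul_left_cancel₀ hE
    linear_combination hs - hlt - conj' t * hp
  have hcd : ∀ t : ℂ, t * conj' E - conj' t * E = c →
      (conj' t * α - 1) * (conj' t * β - 1) = 1 - t * conj' t := by
    intro t hlt
    apply mul_left_cancel₀ hE
    linear_combination conj' t ^ 2 * hprod - conj' t * hsum + conj' t * hlt
  -- generic chain computation
  have chaingen : ∀ Z : ℂ, Z * conj' Z = 1 →
      Tm S (Tm R (Tm Q (Tm P (1 * Z, 1)))) =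
        (1 * (conj' P * Z - 1) * (conj' Q * mob P Z - 1) * (conj' R * mob Q (mob P Z) - 1)
            * (conj' S * mob R (mob Q (mob P Z)) - 1) * mob S (mob R (mob Q (mob P Z))),
         1 * (conj' P * Z - 1) * (conj' Q * mob P Z - 1) * (conj' R * mob Q (mob P Z) - 1)
            * (conj' S * mob R (mob Q (mob P Z)) - 1)) := by
    intro Z hZ
    have u1 := mob_unit hZ hPa
    have u2 := mob_unit u1 hQa
    have u3 := mob_unit u2 hRa
    rw [Tm_swap 1 (mob_num hZ hPa).symm, Tm_swap _ (mob_num u1 hQa).symm,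
      Tm_swap _ (mob_num u2 hRa).symm, Tm_swap _ (mob_num u3 hSa).symm]
  -- chains for α and β
  have sPα : α - P = (conj' P * α - 1) * β := hswap P α β hPl hsum hprod
  have sQβ : β - Q = (conj' Q * β - 1) * α := hswap Q β α hQl hsum' hprod'
  have sRα : α - R = (conj' R * α - 1) * β := hswap R α β hRl hsum hprod
  have sSβ : β - S = (conj' S * β - 1) * α := hswap S β α hSl hsum' hprod'
  have sPβ : β - P = (conj' P * β - 1) * α := hswap P β α hPl hsum' hprod'
  have sQα : α - Q = (conj' Q * α - 1) * β := hswap Q α β hQl hsum hprod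
  have sRβ : β - R = (conj' R * β - 1) * α := hswap R β α hRl hsum' hprod'
  have sSα : α - S = (conj' S * α - 1) * β := hswap S α β hSl hsum hprod
  have chainα : Tm S (Tm R (Tm Q (Tm P (1 * α, 1)))) =
      (1 * (conj' P * α - 1) * (conj' Q * β - 1) * (conj' R * α - 1) * (conj' S * β - 1) * α,
       1 * (conj' P * α - 1) * (conj' Q * β - 1) * (conj' R * α - 1) * (conj' S * β - 1)) := by
    rw [Tm_swap 1 sPα, Tm_swap _ sQβ, Tm_swap _ sRα, Tm_swap _ sSβ]
  have chainβ : Tm S (Tm R (Tm Q (Tm P (1 * β, 1)))) =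
      (1 * (conj' P * β - 1) * (conj' Q * α - 1) * (conj' R * β - 1) * (conj' S * α - 1) * β,
       1 * (conj' P * β - 1) * (conj' Q * α - 1) * (conj' R * β - 1) * (conj' S * α - 1)) := by
    rw [Tm_swap 1 sPβ, Tm_swap _ sQα, Tm_swap _ sRβ, Tm_swap _ sSα]
  have chainX := chaingen X hXu
  rw [hclose] at chainX
  -- entries of the product transformation
  obtain ⟨a, hadef⟩ : ∃ t : ℂ, (Tm S (Tm R (Tm Q (Tm P ((1:ℂ), (0:ℂ)))))).1 = t := ⟨_, rfl⟩
  obtain ⟨b, hbdef⟩ : ∃ t : ℂ, (Tm S (Tm R (Tm Q (Tm P ((0:ℂ), (1:ℂ)))))).1 = t := ⟨_, rfl⟩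
  obtain ⟨cc, hccdef⟩ : ∃ t : ℂ, (Tm S (Tm R (Tm Q (Tm P ((1:ℂ), (0:ℂ)))))).2 = t := ⟨_, rfl⟩
  obtain ⟨dd, hdddef⟩ : ∃ t : ℂ, (Tm S (Tm R (Tm Q (Tm P ((0:ℂ), (1:ℂ)))))).2 = t := ⟨_, rfl⟩
  have hTlin : ∀ z w : ℂ, Tm S (Tm R (Tm Q (Tm P (z, w)))) =
      (a * z + b * w, cc * z + dd * w) := by
    intro z w; rw [← hadef, ← hbdef, ← hccdef, ← hdddef]; exact Tm_lin P Q R S z w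
  rw [hTlin] at chainα chainβ chainX
  rw [Prod.mk.injEq] at chainα chainβ chainX
  obtain ⟨eα1, eα2⟩ := chainα
  obtain ⟨eβ1, eβ2⟩ := chainβ
  obtain ⟨eX1, eX2⟩ := chainX
  obtain ⟨lam, hlamdef⟩ : ∃ t : ℂ,
      1 * (conj' P * α - 1) * (conj' Q * β - 1) * (conj' R * α - 1) * (conj' S * β - 1) = t :=
    ⟨_, rfl⟩
  obtain ⟨lam', hlamdef'⟩ : ∃ t : ℂ,
      1 * (conj' P * β - 1) * (conj' Q * α - 1) * (conj' R * β - 1) * (conj' S * α - 1) = t :=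
    ⟨_, rfl⟩
  obtain ⟨ν, hνdef⟩ : ∃ t : ℂ,
      1 * (conj' P * X - 1) * (conj' Q * mob P X - 1) * (conj' R * mob Q (mob P X) - 1)
        * (conj' S * mob R (mob Q (mob P X)) - 1) = t := ⟨_, rfl⟩
  rw [hlamdef] at eα1 eα2
  rw [hlamdef'] at eβ1 eβ2
  rw [hνdef] at eX1 eX2
  -- nonvanishing
  have u1 := mob_unit hXu hPa
  have u2 := mob_unit u1 hQa
  have u3 := mob_unit u2 hRa
  have hν0 : ν ≠ 0 := by
    rw [← hνdef]
    exact mul_ne_zero (mul_ne_zero (mul_ne_zero (mul_ne_zero one_ne_zero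
      (den_ne hXu hPa)) (den_ne u1 hQa)) (den_ne u2 hRa)) (den_ne u3 hSa)
  have hK0 : (1 - P * conj' P) * (1 - Q * conj' Q) * (1 - R * conj' R) * (1 - S * conj' S) ≠ 0 := by
    have f : ∀ t : ℂ, t * conj' t ≠ 1 → (1 - t * conj' t) ≠ 0 := by
      intro t ht h; exact ht (by linear_combination -h)
    exact mul_ne_zero (mul_ne_zero (mul_ne_zero (f P hPa) (f Q hQa)) (f R hRa)) (f S hSa)
  have hαX : α - X ≠ 0 := sub_ne_zero.mpr (fun h => hXα h.symm)
  have hβX : β - X ≠ 0 := sub_ne_zero.mpr (fun h => hXβ h.symm)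
  have hKlam : lam * lam' =
      (1 - P * conj' P) * (1 - Q * conj' Q) * (1 - R * conj' R) * (1 - S * conj' S) := by
    rw [← hlamdef, ← hlamdef']
    calc 1 * (conj' P * α - 1) * (conj' Q * β - 1) * (conj' R * α - 1) * (conj' S * β - 1) *
          (1 * (conj' P * β - 1) * (conj' Q * α - 1) * (conj' R * β - 1) * (conj' S * α - 1))
        = ((conj' P * α - 1) * (conj' P * β - 1)) * (((conj' Q * α - 1) * (conj' Q * β - 1)) *
          (((conj' R * α - 1) * (conj' R * β - 1)) * ((conj' S * α - 1) * (conj' S * β - 1)))) := by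
          ring
      _ = _ := by rw [hcd P hPl, hcd Q hQl, hcd R hRl, hcd S hSl]; ring
  have hdet : a * dd - b * cc =
      (1 - P * conj' P) * (1 - Q * conj' Q) * (1 - R * conj' R) * (1 - S * conj' S) := by
    rw [← hadef, ← hbdef, ← hccdef, ← hdddef]; exact Tm_det P Q R S
  -- main claim: the transformation is scalar
  have final : cc = 0 ∧ b = 0 ∧ dd = a ∧ a ≠ 0 := by
    by_cases hab : α = β
    · -- tangent case
      have hll' : lam = lam' := by rw [← hlamdef, ← hlamdef', hab]
      have hdl : a * dd - b * cc = lam * ν := by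
        have h5 : (a * dd - b * cc - lam * ν) * (α - X) = 0 := by
          linear_combination (cc * X + dd) * eα1 + (lam * α) * eX2 - (cc * α + dd) * eX1 - (ν * X) * eα2
        rcases mul_eq_zero.mp h5 with h | h
        · linear_combination h
        · exact absurd h hαX
      have hlam0 : lam ≠ 0 := by
        intro h; rw [← hKlam, h] at hK0; simp at hK0
      have hνlam : ν = lam := by
        have : lam * ν = lam * lam' := by rw [← hdl, hdet, hKlam]
        have := mul_left_cancel₀ hlam0 this
        rw [this, ← hll']
      have hccz : cc = 0 := by
        have h5 : cc * (α - X) = 0 := by linear_combination eα2 - eX2 - hνlam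
        rcases mul_eq_zero.mp h5 with h | h
        · exact h
        · exact absurd h hαX
      have hdda : dd = a := by
        have h5 : (a - dd) * (α - X) = 0 := by
          linear_combination eα1 - eX1 - α * eα2 + X * eX2 + (α^2 - X^2) * hccz
        rcases mul_eq_zero.mp h5 with h | h
        · linear_combination -h
        · exact absurd h hαX
      have hlama : lam = a := by
        linear_combination -eα2 + hdda + α * hccz
      have hbz : b = 0 := by linear_combination eα1 + α * hlama
      exact ⟨hccz, hbz, hdda, fun h => hν0 (by rw [hνlam, hlama, h])⟩
    · -- generic case
      have hαβ : α - β ≠ 0 := sub_ne_zero.mpr hab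
      have h1 : a = cc * (α + X) + dd := by
        have h5 : (a - cc * (α + X) - dd) * (α - X) = 0 := by
          linear_combination eα1 - eX1 - α * eα2 + X * eX2
        rcases mul_eq_zero.mp h5 with h | h
        · linear_combination h
        · exact absurd h hαX
      have h2 : a = cc * (β + X) + dd := by
        have h5 : (a - cc * (β + X) - dd) * (β - X) = 0 := by
          linear_combination eβ1 - eX1 - β * eβ2 + X * eX2
        rcases mul_eq_zero.mp h5 with h | h
        · linear_combination h
        · exact absurd h hβX
      have hccz : cc = 0 := by
        have h5 : cc * (α - β) = 0 := by linear_combination h2 - h1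
        rcases mul_eq_zero.mp h5 with h | h
        · exact h
        · exact absurd h hαβ
      have hdda : dd = a := by linear_combination -h1 - (α + X) * hccz
      have hνa : ν = a := by linear_combination -eX2 + X * hccz + hdda
      have hlama : lam = a := by linear_combination -eα2 + α * hccz + hdda
      have hbz : b = 0 := by linear_combination eα1 + α * hlama
      exact ⟨hccz, hbz, hdda, fun h => hν0 (by rw [hνa, h])⟩
  obtain ⟨hccz, hbz, hdda, ha0⟩ := final
  -- conclude for arbitrary Y
  intro Y hYu
  have chainY := chaingen Y hYu
  rw [hTlin, Prod.mk.injEq] at chainY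
  obtain ⟨eY1, eY2⟩ := chainY
  have hw : 1 * (conj' P * Y - 1) * (conj' Q * mob P Y - 1) * (conj' R * mob Q (mob P Y) - 1)
      * (conj' S * mob R (mob Q (mob P Y)) - 1) = a := by
    linear_combination -eY2 + Y * hccz + hdda
  rw [hw] at eY1
  apply mul_left_cancel₀ ha0
  linear_combination -eY1 + hbz

noncomputable def ζmap (o : E2) (ρ : ℝ) (z : E2) : ℂ :=
  (Complex.orthonormalBasisOneI.repr.symm z - Complex.orthonormalBasisOneI.repr.symm o) / (ρ : ℂ)

lemma ζ_sphere (o : E2) (ρ : ℝ) (hρ : 0 < ρ) (z : E2) :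
    z ∈ sphere o ρ ↔ ζmap o ρ z * conj' (ζmap o ρ z) = 1 := by
  rw [mem_sphere_iff_norm, ζmap, Complex.mul_conj]
  have h1 : Complex.normSq ((Complex.orthonormalBasisOneI.repr.symm z -
      Complex.orthonormalBasisOneI.repr.symm o) / (ρ : ℂ)) = ‖z - o‖ ^ 2 / ρ ^ 2 := by
    rw [map_div₀ Complex.normSq, Complex.normSq_ofReal,
      ← LinearIsometryEquiv.map_sub, Complex.normSq_eq_norm_sq,
      LinearIsometryEquiv.norm_map]
    ring
  rw [h1]
  norm_cast
  constructor
  · intro h; rw [h, div_self (pow_ne_zero 2 hρ.ne')]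
  · intro h
    have hn : 0 ≤ ‖z - o‖ := norm_nonneg _
    rw [div_eq_one_iff_eq (pow_ne_zero 2 hρ.ne')] at h
    have h' : ‖z - o‖ ^ 2 = ρ ^ 2 := h
    have h2 : (‖z - o‖ - ρ) * (‖z - o‖ + ρ) = 0 := by linear_combination h'
    rcases mul_eq_zero.mp h2 with h3 | h3
    · linarith
    · linarith

lemma ζ_inj (o : E2) (ρ : ℝ) (hρ : 0 < ρ) {z w : E2}
    (h : ζmap o ρ z = ζmap o ρ w) : z = w := by
  rw [ζmap, ζmap, div_eq_div_iff (by exact_mod_cast hρ.ne') (by exact_mod_cast hρ.ne')] at h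
  have h2 : Complex.orthonormalBasisOneI.repr.symm z =
      Complex.orthonormalBasisOneI.repr.symm w := by
    have := mul_right_cancel₀ (b := (ρ:ℂ)) (by exact_mod_cast hρ.ne') h
    linear_combination this
  exact Complex.orthonormalBasisOneI.repr.symm.injective h2

lemma mem_line_iff (A B z : E2) :
    z ∈ affineSpan ℝ ({A, B} : Set E2) ↔ ∃ t : ℝ, z = A + t • (B - A) := by
  constructor
  · intro h
    have h2 : (z - A) +ᵥ A ∈ affineSpan ℝ ({A, B} : Set E2) := by simpa using h
    obtain ⟨t, ht⟩ := vadd_left_mem_affineSpan_pair.1 h2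
    simp only [vsub_eq_sub] at ht
    exact ⟨t, by rw [ht]; abel⟩
  · rintro ⟨t, rfl⟩
    have h := AffineMap.lineMap_mem_affineSpan_pair t A B
    rw [AffineMap.lineMap_apply] at h
    simp only [vsub_eq_sub, vadd_eq_add] at h
    convert h using 1
    abel

lemma ζ_affine (o : E2) (ρ : ℝ) (hρ : 0 < ρ) (u v : E2) (t : ℝ) :
    ζmap o ρ (u + t • (v - u)) = ζmap o ρ u + (t : ℂ) * (ζmap o ρ v - ζmap o ρ u) := by
  simp only [ζmap, LinearIsometryEquiv.map_add, LinearIsometryEquiv.map_smul,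
    LinearIsometryEquiv.map_sub]
  rw [Complex.real_smul]
  ring

lemma ζ_line (o : E2) (ρ : ℝ) (hρ : 0 < ρ) (A B z : E2) :
    z ∈ affineSpan ℝ ({A, B} : Set E2) ↔
      ∃ t : ℝ, ζmap o ρ z = ζmap o ρ A + (t : ℂ) * (ζmap o ρ B - ζmap o ρ A) := by
  rw [mem_line_iff]
  constructor
  · rintro ⟨t, rfl⟩; exact ⟨t, ζ_affine o ρ hρ A B t⟩
  · rintro ⟨t, ht⟩
    refine ⟨t, ζ_inj o ρ hρ ?_⟩
    rw [ζ_affine o ρ hρ A B t, ht]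

lemma line_eq_iff {W₁ W₂ : ℂ} (hE : W₂ - W₁ ≠ 0) (Z : ℂ) :
    (∃ t : ℝ, Z = W₁ + (t : ℂ) * (W₂ - W₁)) ↔
      Z * conj' (W₂ - W₁) - conj' Z * (W₂ - W₁) =
        W₁ * conj' (W₂ - W₁) - conj' W₁ * (W₂ - W₁) := by
  have hE' : conj' (W₂ - W₁) ≠ 0 := by
    intro h
    apply hE
    have := congrArg conj' h
    simpa using this
  constructor
  · rintro ⟨t, rfl⟩
    simp only [map_add, map_mul, Complex.conj_ofReal]
    ring
  · intro h
    have hreal : conj' ((Z - W₁) / (W₂ - W₁)) = (Z - W₁) / (W₂ - W₁) := by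
      rw [map_div₀, map_sub]
      rw [div_eq_div_iff hE' hE]
      linear_combination -h
    rw [Complex.conj_eq_iff_re] at hreal
    refine ⟨((Z - W₁) / (W₂ - W₁)).re, ?_⟩
    rw [hreal]
    field_simp
    ring

lemma chord_step (o : E2) (ρ : ℝ) (hρ : 0 < ρ) (p : E2) (I : E2 → E2)
    (hI : ChordMap o ρ p I) (hpC : p ∉ sphere o ρ) (y : E2) (hy : y ∈ sphere o ρ) :
    I y ∈ sphere o ρ ∧ ζmap o ρ (I y) = mob (ζmap o ρ p) (ζmap o ρ y) := by
  obtain ⟨hs, hl, huniq⟩ := hI y hy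
  refine ⟨hs, ?_⟩
  have hYu : ζmap o ρ y * conj' (ζmap o ρ y) = 1 := (ζ_sphere o ρ hρ y).1 hy
  have hPa : ζmap o ρ p * conj' (ζmap o ρ p) ≠ 1 := fun h => hpC ((ζ_sphere o ρ hρ p).2 h)
  have hden := den_ne hYu hPa
  have hY'u := mob_unit hYu hPa
  have hnum := mob_num hYu hPa
  have hnumc : (ζmap o ρ p * conj' (ζmap o ρ y) - 1) * conj' (mob (ζmap o ρ p) (ζmap o ρ y)) =
      conj' (ζmap o ρ y) - conj' (ζmap o ρ p) := by
    have := congrArg conj' hnum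
    simpa using this
  have hPY : ζmap o ρ p - ζmap o ρ y ≠ 0 :=
    sub_ne_zero.mpr (fun h => hPa (by rw [h]; exact hYu))
  have hPY' : conj' (ζmap o ρ p) - conj' (ζmap o ρ y) ≠ 0 := by
    intro h
    apply hPY
    have := congrArg conj' h
    simpa using this
  -- the candidate second intersection point in E2
  set z' : E2 := Complex.orthonormalBasisOneI.repr
    ((ρ : ℂ) * mob (ζmap o ρ p) (ζmap o ρ y) + Complex.orthonormalBasisOneI.repr.symm o)
    with hz'def
  have hz' : ζmap o ρ z' = mob (ζmap o ρ p) (ζmap o ρ y) := by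
    rw [hz'def, ζmap, LinearIsometryEquiv.symm_apply_apply, add_sub_cancel_right]
    exact mul_div_cancel_left₀ _ (by exact_mod_cast hρ.ne')
  have hz's : z' ∈ sphere o ρ := (ζ_sphere o ρ hρ z').2 (by rw [hz']; exact hY'u)
  -- z' lies on the line through y and p
  have hreal : conj' ((mob (ζmap o ρ p) (ζmap o ρ y) - ζmap o ρ y) / (ζmap o ρ p - ζmap o ρ y)) =
      (mob (ζmap o ρ p) (ζmap o ρ y) - ζmap o ρ y) / (ζmap o ρ p - ζmap o ρ y) := by
    rw [map_div₀, map_sub, map_sub, div_eq_div_iff hPY' hPY]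
    linear_combination conj' (mob (ζmap o ρ p) (ζmap o ρ y)) * hnum
      - mob (ζmap o ρ p) (ζmap o ρ y) * hnumc
      + (ζmap o ρ p * conj' (ζmap o ρ y) - conj' (ζmap o ρ p) * ζmap o ρ y) * hY'u
  rw [Complex.conj_eq_iff_re] at hreal
  have hz'line : z' ∈ affineSpan ℝ ({y, p} : Set E2) := by
    rw [mem_line_iff]
    refine ⟨((mob (ζmap o ρ p) (ζmap o ρ y) - ζmap o ρ y) / (ζmap o ρ p - ζmap o ρ y)).re,
      ζ_inj o ρ hρ ?_⟩
    rw [ζ_affine o ρ hρ y p, hz', hreal]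
    field_simp
    ring
  -- every point of the circle on the line maps to y or mob
  have hmem : ∀ z : E2, z ∈ sphere o ρ → z ∈ affineSpan ℝ ({y, p} : Set E2) →
      ζmap o ρ z = ζmap o ρ y ∨ ζmap o ρ z = mob (ζmap o ρ p) (ζmap o ρ y) := by
    intro z hzs hzl
    obtain ⟨t, ht⟩ := (mem_line_iff y p z).1 hzl
    have e1 : ζmap o ρ z = ζmap o ρ y + (t : ℂ) * (ζmap o ρ p - ζmap o ρ y) := by
      rw [ht]; exact ζ_affine o ρ hρ y p t
    have e2 : conj' (ζmap o ρ z) = conj' (ζmap o ρ y) +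
        (t : ℂ) * (conj' (ζmap o ρ p) - conj' (ζmap o ρ y)) := by
      have := congrArg conj' e1
      simpa using this
    have hZu : ζmap o ρ z * conj' (ζmap o ρ z) = 1 := (ζ_sphere o ρ hρ z).1 hzs
    have hfac : (ζmap o ρ z - ζmap o ρ y) *
        ((conj' (ζmap o ρ p) * ζmap o ρ y - 1) * ζmap o ρ z - (ζmap o ρ y - ζmap o ρ p)) = 0 := by
      linear_combination (ζmap o ρ y * ζmap o ρ z * (conj' (ζmap o ρ p) - conj' (ζmap o ρ y))) * e1
        - (ζmap o ρ y * ζmap o ρ z * (ζmap o ρ p - ζmap o ρ y)) * e2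
        + (ζmap o ρ z * (ζmap o ρ z - ζmap o ρ p)) * hYu
        + (ζmap o ρ y * (ζmap o ρ p - ζmap o ρ y)) * hZu
    rcases mul_eq_zero.mp hfac with h | h
    · left; linear_combination h
    · right
      rw [mob, eq_div_iff hden]
      linear_combination h
  -- conclude
  rcases huniq z' hz's hz'line with h | h
  · have hYY' : mob (ζmap o ρ p) (ζmap o ρ y) = ζmap o ρ y := by rw [← hz', h]
    rcases hmem (I y) hs hl with h2 | h2
    · rw [h2, hYY']
    · exact h2
  · rw [← h, hz']


theorem porism_main
    (o : E2) (ρ : ℝ) (hρ : 0 < ρ)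
    (w₁ w₂ : E2) (hw : w₁ ≠ w₂)
    (p q r s : E2)
    (hpl : p ∈ affineSpan ℝ ({w₁, w₂} : Set E2))
    (hql : q ∈ affineSpan ℝ ({w₁, w₂} : Set E2))
    (hrl : r ∈ affineSpan ℝ ({w₁, w₂} : Set E2))
    (hsl : s ∈ affineSpan ℝ ({w₁, w₂} : Set E2))
    (hpC : p ∉ sphere o ρ) (hqC : q ∉ sphere o ρ)
    (hrC : r ∉ sphere o ρ) (hsC : s ∉ sphere o ρ)
    (Ip Iq Ir Is : E2 → E2)
    (hIp : ChordMap o ρ p Ip) (hIq : ChordMap o ρ q Iq)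
    (hIr : ChordMap o ρ r Ir) (hIs : ChordMap o ρ s Is)
    (x : E2) (hx : x ∈ sphere o ρ)
    (hxl : x ∉ affineSpan ℝ ({w₁, w₂} : Set E2))
    (hclose : Is (Ir (Iq (Ip x))) = x) :
    ∀ y ∈ sphere o ρ, Is (Ir (Iq (Ip y))) = y := by
  have hW : ζmap o ρ w₂ - ζmap o ρ w₁ ≠ 0 := by
    intro h
    exact hw (ζ_inj o ρ hρ (by linear_combination h)).symm
  -- line equations for p, q, r, s
  have hline : ∀ z : E2, z ∈ affineSpan ℝ ({w₁, w₂} : Set E2) ↔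
      ζmap o ρ z * conj' (ζmap o ρ w₂ - ζmap o ρ w₁)
        - conj' (ζmap o ρ z) * (ζmap o ρ w₂ - ζmap o ρ w₁) =
      ζmap o ρ w₁ * conj' (ζmap o ρ w₂ - ζmap o ρ w₁)
        - conj' (ζmap o ρ w₁) * (ζmap o ρ w₂ - ζmap o ρ w₁) := by
    intro z
    rw [ζ_line o ρ hρ w₁ w₂ z, line_eq_iff hW]
  have hPa : ζmap o ρ p * conj' (ζmap o ρ p) ≠ 1 := fun h => hpC ((ζ_sphere o ρ hρ p).2 h)
  have hQa : ζmap o ρ q * conj' (ζmap o ρ q) ≠ 1 := fun h => hqC ((ζ_sphere o ρ hρ q).2 h)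
  have hRa : ζmap o ρ r * conj' (ζmap o ρ r) ≠ 1 := fun h => hrC ((ζ_sphere o ρ hρ r).2 h)
  have hSa : ζmap o ρ s * conj' (ζmap o ρ s) ≠ 1 := fun h => hsC ((ζ_sphere o ρ hρ s).2 h)
  have hXu : ζmap o ρ x * conj' (ζmap o ρ x) = 1 := (ζ_sphere o ρ hρ x).1 hx
  have hE' : conj' (ζmap o ρ w₂ - ζmap o ρ w₁) ≠ 0 := by
    intro h
    apply hW
    have := congrArg conj' h
    simpa using this
  -- transported closing hypothesis
  have s1 := chord_step o ρ hρ p Ip hIp hpC x hx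
  have s2 := chord_step o ρ hρ q Iq hIq hqC (Ip x) s1.1
  have s3 := chord_step o ρ hρ r Ir hIr hrC (Iq (Ip x)) s2.1
  have s4 := chord_step o ρ hρ s Is hIs hsC (Ir (Iq (Ip x))) s3.1
  have h4 : ζmap o ρ (Is (Ir (Iq (Ip x)))) =
      mob (ζmap o ρ s) (mob (ζmap o ρ r) (mob (ζmap o ρ q) (mob (ζmap o ρ p) (ζmap o ρ x)))) := by
    rw [s4.2, s3.2, s2.2, s1.2]
  have hcloseC : mob (ζmap o ρ s) (mob (ζmap o ρ r) (mob (ζmap o ρ q)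
      (mob (ζmap o ρ p) (ζmap o ρ x)))) = ζmap o ρ x :=
    h4.symm.trans (congrArg (ζmap o ρ) hclose)
  have hcore := core (ζmap o ρ p) (ζmap o ρ q) (ζmap o ρ r) (ζmap o ρ s) (ζmap o ρ x)
    (ζmap o ρ w₂ - ζmap o ρ w₁)
    (ζmap o ρ w₁ * conj' (ζmap o ρ w₂ - ζmap o ρ w₁)
      - conj' (ζmap o ρ w₁) * (ζmap o ρ w₂ - ζmap o ρ w₁))
    hE' ((hline p).1 hpl) ((hline q).1 hql) ((hline r).1 hrl) ((hline s).1 hsl)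
    hPa hQa hRa hSa hXu (fun h => hxl ((hline x).2 h)) hcloseC
  intro y hy
  have t1 := chord_step o ρ hρ p Ip hIp hpC y hy
  have t2 := chord_step o ρ hρ q Iq hIq hqC (Ip y) t1.1
  have t3 := chord_step o ρ hρ r Ir hIr hrC (Iq (Ip y)) t2.1
  have t4 := chord_step o ρ hρ s Is hIs hsC (Ir (Iq (Ip y))) t3.1
  have hYu : ζmap o ρ y * conj' (ζmap o ρ y) = 1 := (ζ_sphere o ρ hρ y).1 hy
  apply ζ_inj o ρ hρ
  rw [t4.2, t3.2, t2.2, t1.2]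
  exact hcore (ζmap o ρ y) hYu

end PorismProof

/-- If the chain of four chords through four collinear points `p, q, r, s` (none on the
circle) closes for one starting point `x` not on the line, then it closes for every
starting point on the circle. -/
theorem porism_cyclic_quadrilaterals
    (o : E2) (ρ : ℝ) (hρ : 0 < ρ)
    (w₁ w₂ : E2) (hw : w₁ ≠ w₂)
    (p q r s : E2)
    (hpl : p ∈ affineSpan ℝ ({w₁, w₂} : Set E2))
    (hql : q ∈ affineSpan ℝ ({w₁, w₂} : Set E2))
    (hrl : r ∈ affineSpan ℝ ({w₁, w₂} : Set E2))
    (hsl : s ∈ affineSpan ℝ ({w₁, w₂} : Set E2))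
    (hpC : p ∉ sphere o ρ) (hqC : q ∉ sphere o ρ)
    (hrC : r ∉ sphere o ρ) (hsC : s ∉ sphere o ρ)
    (Ip Iq Ir Is : E2 → E2)
    (hIp : ChordMap o ρ p Ip) (hIq : ChordMap o ρ q Iq)
    (hIr : ChordMap o ρ r Ir) (hIs : ChordMap o ρ s Is)
    (x : E2) (hx : x ∈ sphere o ρ)
    (hxl : x ∉ affineSpan ℝ ({w₁, w₂} : Set E2))
    (hclose : Is (Ir (Iq (Ip x))) = x) :
    ∀ y ∈ sphere o ρ, Is (Ir (Iq (Ip y))) = y :=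
  PorismProof.porism_main o ρ hρ w₁ w₂ hw p q r s hpl hql hrl hsl hpC hqC hrC hsC
    Ip Iq Ir Is hIp hIq hIr hIs x hx hxl hclose
end

section
/- Suppose the line ℓ is tangent to the circle C at the point a (i.e., ℓ ∩ C = {a}). Let x, y, z, t ∈ C, none lying on ℓ, and let p, q, r, s ∈ ℓ \ {a} be such that p lies on the line xy, q on the line yz, r on the line zt, and s on the line tx. Fix a point o₀ on ℓ and a nonzero direction vector v of ℓ and write each point of ℓ as o₀ + t·v. Then 1/(t_a − t_p) − 1/(t_a − t_q) = 1/(t_a − t_s) − 1/(t_a − t_r) (this equation is independent of the chosen parametrization, since both sides change sign simultaneously when v is replaced by −v). -/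
open Metric

lemma E2.ext' {w u : E2} (h0 : w 0 = u 0) (h1 : w 1 = u 1) : w = u := by
  ext i; fin_cases i <;> assumption

lemma E2.sphere_coord {w o : E2} {ρ : ℝ} (hρ : 0 ≤ ρ) :
    w ∈ sphere o ρ ↔ (w 0 - o 0)^2 + (w 1 - o 1)^2 = ρ^2 := by
  rw [mem_sphere, EuclideanSpace.dist_eq, Fin.sum_univ_two]
  constructor
  · intro h
    rw [← h, Real.sq_sqrt (by positivity)]
    simp [Real.dist_eq, sq_abs]
  · intro h
    have h2 : dist (w 0) (o 0) ^ 2 + dist (w 1) (o 1) ^ 2 = ρ^2 := by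
      simp only [Real.dist_eq, sq_abs]; linarith [h]
    rw [h2, Real.sqrt_sq hρ]

lemma chord_key (A cA αx βx αy βy lam τ : ℝ)
    (hcA : cA ≠ 0)
    (hx : αx^2 + βx^2 = 2*cA*βx) (hy : αy^2 + βy^2 = 2*cA*βy)
    (hβx : βx ≠ 0) (hβy : βy ≠ 0)
    (hβ : βx + lam * (βy - βx) = 0)
    (hα : αx + lam * (αy - αx) = τ * A)
    (hτ : τ ≠ 0) :
    1/τ = A * (αx/βx + αy/βy) / (2*cA) := by
  have hd : βy - βx ≠ 0 := by
    intro h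
    exact hβx (by linear_combination hβ - lam * h)
  have e1 : αx*βy - αy*βx = τ*A*(βy-βx) := by
    linear_combination (βy - βx) * hα - (αy - αx) * hβ
  have key : τ * (A * (αx*βy + αy*βx)) = 2*cA*(βx*βy) := by
    have e2 : (βy - βx) * (τ * (A * (αx*βy + αy*βx))) = (βy - βx) * (2*cA*(βx*βy)) := by
      linear_combination (-(αx*βy + αy*βx)) * e1 + βy^2 * hx - βx^2 * hy
    exact mul_left_cancel₀ hd e2
  have hr : A * (αx/βx + αy/βy) / (2*cA) = (A*(αx*βy + αy*βx)) / (βx*βy*(2*cA)) := by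
    rw [div_add_div _ _ hβx hβy]; ring
  rw [hr, div_eq_div_iff hτ (by positivity)]
  linear_combination -key

/-- The projective butterfly theorem, tangent case: if the line `ℓ`, tangent to the circle
at `a`, meets the consecutive sides of the cyclic quadrilateral `xyzt` in `p, q, r, s`, then
`1/(t_a − t_p) − 1/(t_a − t_q) = 1/(t_a − t_s) − 1/(t_a − t_r)` in any affine parametrization
`t ↦ o₀ + t • v` of `ℓ`. -/
theorem projective_butterfly_tangent
    (o : E2) (ρ : ℝ) (hρ : 0 < ρ)
    -- the line ℓ, parametrized by `o₀` and `v`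
    (o₀ v : E2) (hv : v ≠ 0)
    -- ℓ is tangent to the circle at `a`
    (a : E2)
    (htangent : {w : E2 | ∃ τ : ℝ, w = o₀ + τ • v} ∩ sphere o ρ = {a})
    (x y z t : E2)
    (hxC : x ∈ sphere o ρ) (hyC : y ∈ sphere o ρ)
    (hzC : z ∈ sphere o ρ) (htC : t ∈ sphere o ρ)
    (hxl : ∀ τ : ℝ, x ≠ o₀ + τ • v) (hyl : ∀ τ : ℝ, y ≠ o₀ + τ • v)
    (hzl : ∀ τ : ℝ, z ≠ o₀ + τ • v) (htl : ∀ τ : ℝ, t ≠ o₀ + τ • v)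
    (p q r s : E2)
    (hpa : p ≠ a) (hqa : q ≠ a) (hra : r ≠ a) (hsa : s ≠ a)
    (hpxy : p ∈ affineSpan ℝ ({x, y} : Set E2))
    (hqyz : q ∈ affineSpan ℝ ({y, z} : Set E2))
    (hrzt : r ∈ affineSpan ℝ ({z, t} : Set E2))
    (hstx : s ∈ affineSpan ℝ ({t, x} : Set E2))
    -- coordinates of `a, p, q, r, s` on ℓ
    (ta tp tq tr ts : ℝ)
    (hta : a = o₀ + ta • v)
    (htp : p = o₀ + tp • v) (htq : q = o₀ + tq • v)
    (htr : r = o₀ + tr • v) (hts : s = o₀ + ts • v) :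
    1 / (ta - tp) - 1 / (ta - tq) = 1 / (ta - ts) - 1 / (ta - tr) := by
  have coord : ∀ (w : E2) (τ : ℝ), w = o₀ + τ • v →
      w 0 = o₀ 0 + τ * v 0 ∧ w 1 = o₀ 1 + τ * v 1 := fun w τ h =>
    ⟨by simpa using congrArg (fun w : E2 => w 0) h, by simpa using congrArg (fun w : E2 => w 1) h⟩
  obtain ⟨ha0, ha1⟩ := coord a ta hta
  have hA : v 0 ^ 2 + v 1 ^ 2 ≠ 0 := by
    intro h
    apply hv
    have h0 : v 0 = 0 := by nlinarith [sq_nonneg (v 0), sq_nonneg (v 1)]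
    have h1 : v 1 = 0 := by nlinarith [sq_nonneg (v 0), sq_nonneg (v 1)]
    exact E2.ext' (by simpa using h0) (by simpa using h1)
  have haC : a ∈ sphere o ρ := ((Set.ext_iff.mp htangent a).mpr rfl).2
  have haCc : (a 0 - o 0)^2 + (a 1 - o 1)^2 = ρ^2 := (E2.sphere_coord hρ.le).mp haC
  -- uniqueness of the tangency point
  have huniq : ∀ τ : ℝ, (a 0 + (τ - ta) * v 0 - o 0)^2 + (a 1 + (τ - ta) * v 1 - o 1)^2 = ρ^2 →
      τ = ta := by
    intro τ h
    have hmemL : (o₀ + τ • v) ∈ {w : E2 | ∃ τ' : ℝ, w = o₀ + τ' • v} := ⟨τ, rfl⟩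
    obtain ⟨c0, c1⟩ := coord (o₀ + τ • v) τ rfl
    have hmemS : (o₀ + τ • v) ∈ sphere o ρ := by
      rw [E2.sphere_coord hρ.le, c0, c1]
      rw [show o₀ 0 + τ * v 0 = a 0 + (τ - ta) * v 0 by rw [ha0]; ring,
          show o₀ 1 + τ * v 1 = a 1 + (τ - ta) * v 1 by rw [ha1]; ring]
      exact h
    have heq : o₀ + τ • v = a := (Set.ext_iff.mp htangent _).mp ⟨hmemL, hmemS⟩
    have e0 : o₀ 0 + τ * v 0 = a 0 := by rw [← c0, heq]
    have e1 : o₀ 1 + τ * v 1 = a 1 := by rw [← c1, heq]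
    have hz : (τ - ta)^2 * (v 0 ^ 2 + v 1 ^ 2) = 0 := by
      linear_combination ((τ - ta)*(v 0)) * e0 + ((τ - ta)*(v 1)) * e1
        + ((τ - ta)*(v 0)) * ha0 + ((τ - ta)*(v 1)) * ha1
    have : (τ - ta)^2 = 0 := by
      rcases mul_eq_zero.mp hz with h' | h'
      · exact h'
      · exact absurd h' hA
    have := pow_eq_zero_iff (n := 2) (by norm_num) |>.mp this
    linarith [this]
  -- orthogonality of (a - o) and v
  have hD : (a 0 - o 0) * v 0 + (a 1 - o 1) * v 1 = 0 := by
    by_contra hD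
    set D := (a 0 - o 0) * v 0 + (a 1 - o 1) * v 1 with hDdef
    set δ := -2*D/(v 0 ^ 2 + v 1 ^ 2) with hδdef
    have hδ : (v 0 ^ 2 + v 1 ^ 2) * δ = -2*D := by
      rw [hδdef]; field_simp
    have hmem : (a 0 + ((ta + δ) - ta) * v 0 - o 0)^2 + (a 1 + ((ta + δ) - ta) * v 1 - o 1)^2
        = ρ^2 := by
      linear_combination haCc + δ * hδ
    have := huniq (ta + δ) hmem
    have hδ0 : δ = 0 := by linarith
    rw [hδ0] at hδ
    simp at hδ
    exact hD (by linarith)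
  set cA := (o 1 - a 1) * v 0 - (o 0 - a 0) * v 1 with hcAdef
  have hc0 : (v 0 ^ 2 + v 1 ^ 2) * (o 0 - a 0) = -cA * v 1 := by
    rw [hcAdef]; linear_combination (-(v 0)) * hD
  have hc1 : (v 0 ^ 2 + v 1 ^ 2) * (o 1 - a 1) = cA * v 0 := by
    rw [hcAdef]; linear_combination (-(v 1)) * hD
  have hAρ : (v 0 ^ 2 + v 1 ^ 2) * ρ^2 = cA^2 := by
    have h2 : (v 0 ^ 2 + v 1 ^ 2) * ((v 0 ^ 2 + v 1 ^ 2) * ρ^2)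
        = (v 0 ^ 2 + v 1 ^ 2) * cA^2 := by
      linear_combination (-((v 0 ^ 2 + v 1 ^ 2)^2)) * haCc
        + ((v 0 ^ 2 + v 1 ^ 2) * (o 0 - a 0) - cA * v 1) * hc0
        + ((v 0 ^ 2 + v 1 ^ 2) * (o 1 - a 1) + cA * v 0) * hc1
    exact mul_left_cancel₀ hA h2
  have hApos : 0 < v 0 ^ 2 + v 1 ^ 2 := by
    rcases lt_or_eq_of_le (by positivity : (0:ℝ) ≤ v 0 ^ 2 + v 1 ^ 2) with h | h
    · exact h
    · exact absurd h.symm hA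
  have hcA : cA ≠ 0 := by
    intro h
    rw [h] at hAρ
    norm_num at hAρ
    rcases hAρ with h' | h'
    · exact hA h'
    · exact hρ.ne' h'
  -- circle relation in tangent coordinates
  have circ : ∀ w : E2, w ∈ sphere o ρ →
      ((w 0 - a 0)*v 0 + (w 1 - a 1)*v 1)^2 + (-(w 0 - a 0)*v 1 + (w 1 - a 1)*v 0)^2
        = 2*cA*(-(w 0 - a 0)*v 1 + (w 1 - a 1)*v 0) := by
    intro w hw
    have hwc := (E2.sphere_coord hρ.le).mp hw
    have h2 : (v 0 ^ 2 + v 1 ^ 2) *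
        (((w 0 - a 0)*v 0 + (w 1 - a 1)*v 1)^2 + (-(w 0 - a 0)*v 1 + (w 1 - a 1)*v 0)^2)
        = (v 0 ^ 2 + v 1 ^ 2) *
        (2*cA*(-(w 0 - a 0)*v 1 + (w 1 - a 1)*v 0)) := by
      linear_combination ((v 0 ^ 2 + v 1 ^ 2)^2) * hwc - ((v 0 ^ 2 + v 1 ^ 2)^2) * haCc
        + (2*(v 0 ^ 2 + v 1 ^ 2)*(w 0 - a 0)) * hc0
        + (2*(v 0 ^ 2 + v 1 ^ 2)*(w 1 - a 1)) * hc1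
    exact mul_left_cancel₀ hA h2
  -- points off the line have nonzero β
  have hbeta : ∀ w : E2, (∀ τ : ℝ, w ≠ o₀ + τ • v) →
      (-(w 0 - a 0)*v 1 + (w 1 - a 1)*v 0) ≠ 0 := by
    intro w hw hβ0
    apply hw (ta + ((w 0 - a 0)*v 0 + (w 1 - a 1)*v 1)/(v 0 ^ 2 + v 1 ^ 2))
    have hr0 : (o₀ + (ta + ((w 0 - a 0)*v 0 + (w 1 - a 1)*v 1)/(v 0 ^ 2 + v 1 ^ 2)) • v) 0
        = o₀ 0 + (ta + ((w 0 - a 0)*v 0 + (w 1 - a 1)*v 1)/(v 0 ^ 2 + v 1 ^ 2)) * v 0 := by simp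
    have hr1 : (o₀ + (ta + ((w 0 - a 0)*v 0 + (w 1 - a 1)*v 1)/(v 0 ^ 2 + v 1 ^ 2)) • v) 1
        = o₀ 1 + (ta + ((w 0 - a 0)*v 0 + (w 1 - a 1)*v 1)/(v 0 ^ 2 + v 1 ^ 2)) * v 1 := by simp
    apply E2.ext'
    · rw [hr0, show o₀ 0 = a 0 - ta * v 0 by rw [ha0]; ring]
      field_simp
      linear_combination (-(v 1)) * hβ0
    · rw [hr1]
      rw [show o₀ 1 = a 1 - ta * v 1 by rw [ha1]; ring]
      field_simp
      linear_combination (v 0) * hβ0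
  -- the main chord formula
  have main : ∀ (w₁ w₂ pp : E2) (tpp : ℝ), w₁ ∈ sphere o ρ → w₂ ∈ sphere o ρ →
      (∀ τ : ℝ, w₁ ≠ o₀ + τ • v) → (∀ τ : ℝ, w₂ ≠ o₀ + τ • v) →
      pp ∈ affineSpan ℝ ({w₁, w₂} : Set E2) → pp = o₀ + tpp • v → pp ≠ a →
      1/(tpp - ta) = (v 0 ^ 2 + v 1 ^ 2) *
        (((w₁ 0 - a 0)*v 0 + (w₁ 1 - a 1)*v 1) / (-(w₁ 0 - a 0)*v 1 + (w₁ 1 - a 1)*v 0)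
         + ((w₂ 0 - a 0)*v 0 + (w₂ 1 - a 1)*v 1) / (-(w₂ 0 - a 0)*v 1 + (w₂ 1 - a 1)*v 0))
        / (2*cA) := by
    intro w₁ w₂ pp tpp h1C h2C h1l h2l hmem hppeq hppa
    obtain ⟨c0, c1⟩ := coord pp tpp hppeq
    have hmem' : (pp -ᵥ w₁) +ᵥ w₁ ∈ affineSpan ℝ ({w₁, w₂} : Set E2) := by rwa [vsub_vadd]
    obtain ⟨lam, hlam⟩ := vadd_left_mem_affineSpan_pair.mp hmem'
    have hl0 : lam * (w₂ 0 - w₁ 0) = pp 0 - w₁ 0 := by simpa using congrArg (fun w : E2 => w 0) hlam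
    have hl1 : lam * (w₂ 1 - w₁ 1) = pp 1 - w₁ 1 := by simpa using congrArg (fun w : E2 => w 1) hlam
    have hτ : tpp - ta ≠ 0 := sub_ne_zero.mpr (fun h => hppa (by rw [hppeq, h, ← hta]))
    apply chord_key (v 0 ^ 2 + v 1 ^ 2) cA _ _ _ _ lam _ hcA (circ w₁ h1C) (circ w₂ h2C)
      (hbeta w₁ h1l) (hbeta w₂ h2l) ?_ ?_ hτ
    · linear_combination (-(v 1)) * hl0 + (v 0) * hl1 - (v 1) * c0 + (v 0) * c1
        + (v 1) * ha0 - (v 0) * ha1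
    · linear_combination (v 0) * hl0 + (v 1) * hl1 + (v 0) * c0 + (v 1) * c1
        - (v 0) * ha0 - (v 1) * ha1
  have ep := main x y p tp hxC hyC hxl hyl hpxy htp hpa
  have eq' := main y z q tq hyC hzC hyl hzl hqyz htq hqa
  have er := main z t r tr hzC htC hzl htl hrzt htr hra
  have es := main t x s ts htC hxC htl hxl hstx hts hsa
  rw [show ta - tp = -(tp - ta) by ring, show ta - tq = -(tq - ta) by ring,
      show ta - tr = -(tr - ta) by ring, show ta - ts = -(ts - ta) by ring,
      one_div_neg_eq_neg_one_div, one_div_neg_eq_neg_one_div,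
      one_div_neg_eq_neg_one_div, one_div_neg_eq_neg_one_div,
      ep, eq', er, es]
  ring
end

section
/- Suppose the line ℓ is tangent to the circle C at the point a (i.e., ℓ ∩ C = {a}), and let p, q, r, s ∈ ℓ \ {a}. Fix a point o₀ on ℓ and a nonzero direction vector v of ℓ and write each point of ℓ as o₀ + t·v. If 1/(t_a − t_p) − 1/(t_a − t_q) = 1/(t_a − t_s) − 1/(t_a − t_r), then I_s ∘ I_r ∘ I_q ∘ I_p is the identity map of C. -/
open Metric
open scoped RealInnerProductSpace

lemma inner_self_pos' {x : E2} (hx : x ≠ 0) : 0 < ⟪x, x⟫ :=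
  lt_of_le_of_ne real_inner_self_nonneg (Ne.symm (inner_self_ne_zero.mpr hx))

lemma mem_sphere_inner {o x : E2} {ρ : ℝ} (hρ : 0 ≤ ρ) :
    x ∈ sphere o ρ ↔ ⟪x - o, x - o⟫ = ρ^2 := by
  rw [mem_sphere_iff_norm, real_inner_self_eq_norm_sq]
  constructor
  · intro h; rw [h]
  · intro h; nlinarith [norm_nonneg (x - o)]

lemma eq_zero_of_perp_pair {v n : E2} (w : E2) (hv : v ≠ 0) (hn : n ≠ 0)
    (hvn : ⟪v, n⟫ = 0) (h1 : ⟪w, v⟫ = 0) (h2 : ⟪w, n⟫ = 0) : w = 0 := by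
  have hv2 : (0:ℝ) < v 0 * v 0 + v 1 * v 1 := by
    simpa only [PiLp.inner_apply, Fin.sum_univ_two, RCLike.inner_apply, conj_trivial] using inner_self_pos' hv
  have hn2 : (0:ℝ) < n 0 * n 0 + n 1 * n 1 := by
    simpa only [PiLp.inner_apply, Fin.sum_univ_two, RCLike.inner_apply, conj_trivial] using inner_self_pos' hn
  simp only [PiLp.inner_apply, Fin.sum_univ_two, RCLike.inner_apply, conj_trivial] at hvn h1 h2
  have hdet : v 0 * n 1 - v 1 * n 0 ≠ 0 := by
    intro h
    nlinarith [sq_nonneg (v 0 * n 1 - v 1 * n 0)]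
  have hw0 : w 0 = 0 := by
    have h3 : w 0 * (v 0 * n 1 - v 1 * n 0) = 0 := by linear_combination n 1 * h1 - v 1 * h2
    rcases mul_eq_zero.mp h3 with h | h
    · exact h
    · exact absurd h hdet
  have hw1 : w 1 = 0 := by
    have h3 : w 1 * (v 0 * n 1 - v 1 * n 0) = 0 := by linear_combination v 0 * h2 - n 0 * h1
    rcases mul_eq_zero.mp h3 with h | h
    · exact h
    · exact absurd h hdet
  ext i
  fin_cases i
  · simpa using hw0
  · simpa using hw1

lemma decomp {v n : E2} (hv : v ≠ 0) (hn : n ≠ 0) (hvn : ⟪v, n⟫ = 0) (w : E2) :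
    w = (⟪w, v⟫ / ⟪v, v⟫) • v + (⟪w, n⟫ / ⟪n, n⟫) • n := by
  have hV : ⟪v, v⟫ ≠ 0 := ne_of_gt (inner_self_pos' hv)
  have hN : ⟪n, n⟫ ≠ 0 := ne_of_gt (inner_self_pos' hn)
  have hnv : ⟪n, v⟫ = 0 := by rwa [real_inner_comm] at hvn
  have h := eq_zero_of_perp_pair (w - ((⟪w, v⟫ / ⟪v, v⟫) • v + (⟪w, n⟫ / ⟪n, n⟫) • n)) hv hn hvn
    (by simp only [inner_sub_left, inner_add_left, real_inner_smul_left, hnv, mul_zero, add_zero]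
        rw [div_mul_cancel₀ _ hV, sub_self])
    (by simp only [inner_sub_left, inner_add_left, real_inner_smul_left, hvn, mul_zero, zero_add]
        rw [div_mul_cancel₀ _ hN, sub_self])
  exact (sub_eq_zero.mp h)

lemma circle_eq {o a x : E2} {ρ : ℝ} (hρ : 0 ≤ ρ) (ha : a ∈ sphere o ρ)
    (hx : x ∈ sphere o ρ) : ⟪x - a, x - a⟫ = 2 * ⟪x - a, o - a⟫ := by
  rw [mem_sphere_inner hρ] at ha hx
  have e1 : x - a = (x - o) - (a - o) := by abel
  have e2 : o - a = -(a - o) := by abel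
  rw [e1, e2]
  have key : ∀ e f : E2, ⟪e, e⟫ = ρ^2 → ⟪f, f⟫ = ρ^2 →
      ⟪e - f, e - f⟫ = 2 * ⟪e - f, -f⟫ := by
    intro e f h1 h2
    simp only [inner_sub_left, inner_sub_right, inner_neg_right]
    have hc := real_inner_comm e f
    linarith
  exact key _ _ hx ha

lemma B_ne_zero {o a x : E2} {ρ : ℝ} (hρ : 0 ≤ ρ) (ha : a ∈ sphere o ρ)
    (hx : x ∈ sphere o ρ) (hxa : x ≠ a) : ⟪x - a, o - a⟫ ≠ 0 := by
  have h := circle_eq hρ ha hx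
  have h2 : 0 < ⟪x - a, x - a⟫ := inner_self_pos' (sub_ne_zero.mpr hxa)
  intro h0; rw [h0] at h; linarith

lemma chordMap_eq {o : E2} {ρ : ℝ} (hρ : 0 < ρ) {p : E2} {I : E2 → E2}
    (hI : ChordMap o ρ p I) (hp : p ∉ sphere o ρ) {x : E2} (hx : x ∈ sphere o ρ) :
    I x = x + (2 * ⟪o - x, p - x⟫ / ⟪p - x, p - x⟫) • (p - x) := by
  have hpx : p - x ≠ 0 := sub_ne_zero.mpr (fun h => hp (h ▸ hx))
  have hG : ⟪p - x, p - x⟫ ≠ 0 := ne_of_gt (inner_self_pos' hpx)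
  have hx2 : ⟪x - o, x - o⟫ = ρ^2 := (mem_sphere_inner hρ.le).mp hx
  have hS : ⟪o - x, p - x⟫ = -⟪x - o, p - x⟫ := by
    rw [show o - x = -(x - o) by abel, inner_neg_left]
  set t0 : ℝ := 2 * ⟪o - x, p - x⟫ / ⟪p - x, p - x⟫ with ht0
  have hquad : ∀ t : ℝ, (x + t • (p - x)) ∈ sphere o ρ ↔
      2 * (t * ⟪x - o, p - x⟫) + t * (t * ⟪p - x, p - x⟫) = 0 := by
    intro t
    rw [mem_sphere_inner hρ.le]
    have e : x + t • (p - x) - o = (x - o) + t • (p - x) := by abel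
    rw [e, real_inner_add_add_self, real_inner_smul_right, real_inner_smul_left,
      real_inner_smul_right, hx2]
    constructor
    · intro h; linarith
    · intro h; linarith
  have hy0S : x + t0 • (p - x) ∈ sphere o ρ := by
    rw [hquad, ht0, hS]
    have key : ∀ S G : ℝ, G ≠ 0 →
        2 * (2 * -S / G * S) + 2 * -S / G * (2 * -S / G * G) = 0 := by
      intro S G hG; field_simp; ring
    exact key _ _ hG
  have hy0L : x + t0 • (p - x) ∈ affineSpan ℝ ({x, p} : Set E2) := by
    have e : x + t0 • (p - x) = t0 • (p -ᵥ x) +ᵥ x := by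
      simp only [vsub_eq_sub, vadd_eq_add]; abel
    rw [e]
    exact smul_vsub_vadd_mem_affineSpan_pair _ _ _
  rcases (hI x hx).2.2 _ hy0S hy0L with h | h
  · -- tangent case: x + t0 • (p - x) = x
    have h2 : t0 • (p - x) = 0 := by
      have := congrArg (fun z => z - x) h
      simpa using this
    have ht00 : t0 = 0 := by
      rcases smul_eq_zero.mp h2 with h3 | h3
      · exact h3
      · exact absurd h3 hpx
    have hS0 : ⟪x - o, p - x⟫ = 0 := by
      rw [ht0, hS] at ht00
      have := (div_eq_zero_iff.mp ht00).resolve_right hG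
      linarith
    have hmem := (hI x hx).2.1
    rw [show I x = (I x - x) +ᵥ x by simp only [vadd_eq_add]; abel] at hmem
    obtain ⟨t1, ht1⟩ := vadd_left_mem_affineSpan_pair.mp hmem
    have hIx : I x = x + t1 • (p - x) := by
      rw [vsub_eq_sub] at ht1
      rw [ht1]; abel
    have hIxS := (hI x hx).1
    rw [hIx] at hIxS
    rw [hquad] at hIxS
    rw [hS0] at hIxS
    have ht10 : t1 = 0 := by
      have h4 : t1 * t1 * ⟪p - x, p - x⟫ = 0 := by linarith
      rcases mul_eq_zero.mp h4 with h5 | h5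
      · rcases mul_eq_zero.mp h5 with h6 | h6 <;> exact h6
      · exact absurd h5 hG
    rw [hIx, ht10, ht00]
  · exact h.symm

lemma step_u {o : E2} {ρ : ℝ} (hρ : 0 < ρ) {a v : E2} (hv : v ≠ 0)
    (ha : a ∈ sphere o ρ) (hvn : ⟪v, o - a⟫ = 0)
    {c : ℝ} (hc : c ≠ 0) {p : E2} (hpc : p = a + c • v) (hpS : p ∉ sphere o ρ)
    {I : E2 → E2} (hI : ChordMap o ρ p I)
    {x : E2} (hx : x ∈ sphere o ρ) (hxB : ⟪x - a, o - a⟫ ≠ 0) :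
    I x ∈ sphere o ρ ∧ ⟪I x - a, o - a⟫ ≠ 0 ∧
      ⟪I x - a, v⟫ / ⟪I x - a, o - a⟫ = 2 / c - ⟪x - a, v⟫ / ⟪x - a, o - a⟫ := by
  have hIxS : I x ∈ sphere o ρ := (hI x hx).1
  have hVpos : 0 < ⟪v, v⟫ := inner_self_pos' hv
  have hpx0 : p - x ≠ 0 := sub_ne_zero.mpr (fun h => hpS (h ▸ hx))
  have hG : ⟪p - x, p - x⟫ ≠ 0 := ne_of_gt (inner_self_pos' hpx0)
  have hw : ⟪x - a, x - a⟫ = 2 * ⟪x - a, o - a⟫ := circle_eq hρ.le ha hx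
  have hnv : ⟪o - a, v⟫ = 0 := by rwa [real_inner_comm] at hvn
  have hpx : p - x = c • v - (x - a) := by rw [hpc]; abel
  set A := ⟪x - a, v⟫ with hA
  set B := ⟪x - a, o - a⟫ with hB
  set V := ⟪v, v⟫ with hV
  have hxav : ⟪v, x - a⟫ = A := real_inner_comm _ _
  have hxan : ⟪o - a, x - a⟫ = B := real_inner_comm _ _
  have h1 : ⟪p - x, v⟫ = c * V - A := by
    rw [hpx, inner_sub_left, real_inner_smul_left]
  have h2 : ⟪p - x, o - a⟫ = -B := by
    rw [hpx, inner_sub_left, real_inner_smul_left, hvn, ← hB]; ring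
  have h3 : ⟪p - x, p - x⟫ = c^2 * V - 2*(c*A) + 2*B := by
    rw [hpx, real_inner_sub_sub_self, real_inner_smul_left, real_inner_smul_left,
      real_inner_smul_right, hxav, hw]
    ring
  have h4 : ⟪o - x, p - x⟫ = B - c * A := by
    have e : o - x = (o - a) - (x - a) := by abel
    have h5 : ⟪x - a, p - x⟫ = c * A - 2 * B := by
      rw [hpx, inner_sub_right, real_inner_smul_right, hw, ← hA]
    rw [e, inner_sub_left, real_inner_comm (p - x) (o - a), h2, h5]; ring
  have hD : c^2 * V - 2*(c*A) + 2*B ≠ 0 := h3 ▸ hG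
  have hIx : I x = x + (2 * (B - c * A) / (c^2 * V - 2*(c*A) + 2*B)) • (p - x) := by
    rw [chordMap_eq hρ hI hpS hx, h4, h3]
  set t0 : ℝ := 2 * (B - c * A) / (c^2 * V - 2*(c*A) + 2*B) with ht0
  have ht0D : t0 * (c^2 * V - 2*(c*A) + 2*B) = 2 * (B - c * A) := by
    rw [ht0]; exact div_mul_cancel₀ _ hD
  have hwa : I x - a = (x - a) + t0 • (p - x) := by rw [hIx]; abel
  have hA' : ⟪I x - a, v⟫ = A + t0 * (c * V - A) := by
    rw [hwa, inner_add_left, real_inner_smul_left, h1]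
  have hB' : ⟪I x - a, o - a⟫ = (1 - t0) * B := by
    rw [hwa, inner_add_left, real_inner_smul_left, h2]; ring
  have h1mt0 : (1 - t0) * (c^2 * V - 2*(c*A) + 2*B) = c^2 * V := by
    linear_combination -ht0D
  have ht0ne1 : (1 : ℝ) - t0 ≠ 0 := by
    intro h0
    rw [h0, zero_mul] at h1mt0
    exact (mul_ne_zero (pow_ne_zero 2 hc) (ne_of_gt hVpos)) h1mt0.symm
  have hB'ne : ⟪I x - a, o - a⟫ ≠ 0 := by
    rw [hB']; exact mul_ne_zero ht0ne1 hxB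
  refine ⟨hIxS, hB'ne, ?_⟩
  rw [hA', hB']
  rw [div_sub_div _ _ hc hxB, div_eq_div_iff (mul_ne_zero ht0ne1 hxB) (mul_ne_zero hc hxB)]
  linear_combination B * ht0D

lemma u_inj {o a v : E2} {ρ : ℝ} (hρ : 0 < ρ) (hv : v ≠ 0)
    (ha : a ∈ sphere o ρ) (hvn : ⟪v, o - a⟫ = 0)
    {x y : E2} (hx : x ∈ sphere o ρ) (hy : y ∈ sphere o ρ)
    (hbx : ⟪x - a, o - a⟫ ≠ 0) (hby : ⟪y - a, o - a⟫ ≠ 0)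
    (h : ⟪x - a, v⟫ / ⟪x - a, o - a⟫ = ⟪y - a, v⟫ / ⟪y - a, o - a⟫) : x = y := by
  have hn : (o - a) ≠ 0 := by
    intro h0
    have h2 : ⟪a - o, a - o⟫ = ρ^2 := (mem_sphere_inner hρ.le).mp ha
    rw [show a - o = -(o - a) by abel, h0, neg_zero] at h2
    simp at h2
    nlinarith
  have hVpos : 0 < ⟪v, v⟫ := inner_self_pos' hv
  have hNpos : 0 < ⟪o - a, o - a⟫ := inner_self_pos' hn
  set Ax := ⟪x - a, v⟫ with hAx
  set Bx := ⟪x - a, o - a⟫ with hBx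
  set Ay := ⟪y - a, v⟫ with hAy
  set By := ⟪y - a, o - a⟫ with hBy
  set V := ⟪v, v⟫ with hV
  set N := ⟪o - a, o - a⟫ with hN
  have dx := decomp hv hn hvn (x - a)
  have dy := decomp hv hn hvn (y - a)
  rw [← hAx, ← hBx, ← hV, ← hN] at dx
  rw [← hAy, ← hBy, ← hV, ← hN] at dy
  have hex : ⟪x - a, x - a⟫ = Ax^2 / V + Bx^2 / N := by
    conv_lhs => rw [dx]
    simp only [real_inner_add_add_self, real_inner_smul_left, real_inner_smul_right, hvn,
      ← hV, ← hN, mul_zero, add_zero]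
    field_simp
  have hey : ⟪y - a, y - a⟫ = Ay^2 / V + By^2 / N := by
    conv_lhs => rw [dy]
    simp only [real_inner_add_add_self, real_inner_smul_left, real_inner_smul_right, hvn,
      ← hV, ← hN, mul_zero, add_zero]
    field_simp
  have ex : Ax^2 * N + Bx^2 * V = 2 * Bx * V * N := by
    have := (circle_eq hρ.le ha hx).symm.trans hex
    rw [← hBx] at this
    field_simp at this
    linarith
  have ey : Ay^2 * N + By^2 * V = 2 * By * V * N := by
    have := (circle_eq hρ.le ha hy).symm.trans hey
    rw [← hBy] at this
    field_simp at this
    linarith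
  have hAB : Ax * By = Ay * Bx := by
    rw [div_eq_div_iff hbx hby] at h
    exact h
  have key : 2 * V * N * Bx * By * (By - Bx) = 0 := by
    linear_combination Bx^2 * ey - By^2 * ex + N * (Ax * By + Ay * Bx) * hAB
  have hBeq : By = Bx := by
    have hprod : 2 * V * N * Bx * By ≠ 0 :=
      mul_ne_zero (mul_ne_zero (mul_ne_zero (mul_ne_zero two_ne_zero hVpos.ne') hNpos.ne') hbx) hby
    have h1 : By - Bx = 0 := by
      rcases mul_eq_zero.mp key with h2 | h2
      · exact absurd h2 hprod
      · exact h2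
    linarith
  have hAeq : Ay = Ax := by
    have h1 := hAB
    rw [hBeq] at h1
    exact (mul_right_cancel₀ hbx h1).symm
  have hsub : x - a = y - a := by
    rw [dx, dy, hAeq, hBeq]
  exact sub_left_inj.mp hsub

lemma line_pt {o : E2} {ρ : ℝ} {o₀ v a : E2}
    (htangent : {w : E2 | ∃ τ : ℝ, w = o₀ + τ • v} ∩ sphere o ρ = {a})
    {p : E2} {ta tp : ℝ} (hta : a = o₀ + ta • v) (htp : p = o₀ + tp • v) (hpa : p ≠ a) :
    tp - ta ≠ 0 ∧ p = a + (tp - ta) • v ∧ p ∉ sphere o ρ := by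
  have h2 : p = a + (tp - ta) • v := by rw [htp, hta]; module
  have h1 : tp - ta ≠ 0 := by
    intro h0; rw [h0, zero_smul, add_zero] at h2; exact hpa h2
  refine ⟨h1, h2, ?_⟩
  intro hS
  have hm : p ∈ ({a} : Set E2) := by rw [← htangent]; exact ⟨⟨tp, htp⟩, hS⟩
  exact hpa hm

lemma chord_fix {o : E2} {ρ : ℝ} (hρ : 0 < ρ) {a v : E2} (ha : a ∈ sphere o ρ)
    (hvn : ⟪v, o - a⟫ = 0) {c : ℝ} {p : E2} (hpc : p = a + c • v) (hpS : p ∉ sphere o ρ)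
    {I : E2 → E2} (hI : ChordMap o ρ p I) : I a = a := by
  rw [chordMap_eq hρ hI hpS ha]
  have h1 : p - a = c • v := by rw [hpc]; abel
  have hvn' : ⟪o - a, v⟫ = 0 := by rw [real_inner_comm]; exact hvn
  have h2 : ⟪o - a, p - a⟫ = 0 := by
    rw [h1, real_inner_smul_right, hvn', mul_zero]
  rw [h2]
  norm_num

lemma tangent_perp {o : E2} {ρ : ℝ} (hρ : 0 < ρ) {o₀ v a : E2} (hv : v ≠ 0)
    (htangent : {w : E2 | ∃ τ : ℝ, w = o₀ + τ • v} ∩ sphere o ρ = {a})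
    {ta : ℝ} (hta : a = o₀ + ta • v) (haS : a ∈ sphere o ρ) : ⟪v, o - a⟫ = 0 := by
  have hVpos : 0 < ⟪v, v⟫ := inner_self_pos' hv
  set τ' : ℝ := -2 * ⟪o₀ - o, v⟫ / ⟪v, v⟫ - ta with hτ'
  have expand : ∀ t : ℝ, ⟪o₀ + t • v - o, o₀ + t • v - o⟫
      = ⟪o₀ - o, o₀ - o⟫ + 2 * (t * ⟪o₀ - o, v⟫) + t * (t * ⟪v, v⟫) := by
    intro t
    rw [show o₀ + t • v - o = (o₀ - o) + t • v by abel, real_inner_add_add_self,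
      real_inner_smul_right, real_inner_smul_left, real_inner_smul_right]
  have haeq : ⟪o₀ - o, o₀ - o⟫ + 2 * (ta * ⟪o₀ - o, v⟫) + ta * (ta * ⟪v, v⟫) = ρ^2 := by
    rw [← expand, ← hta]
    exact (mem_sphere_inner hρ.le).mp haS
  have scalar : ∀ M Mv V t : ℝ, V ≠ 0 → M + 2*(t*Mv) + t*(t*V) = ρ^2 →
      M + 2*((-2*Mv/V - t)*Mv) + (-2*Mv/V - t)*((-2*Mv/V - t)*V) = ρ^2 := by
    intro M Mv V t hV h
    field_simp
    linear_combination V * h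
  have hmem : o₀ + τ' • v ∈ sphere o ρ := by
    rw [mem_sphere_inner hρ.le, expand, hτ']
    exact scalar _ _ _ _ (ne_of_gt hVpos) haeq
  have heq : o₀ + τ' • v = a := by
    have hm : o₀ + τ' • v ∈ ({a} : Set E2) := by
      rw [← htangent]; exact ⟨⟨τ', rfl⟩, hmem⟩
    exact hm
  have hτ : τ' = ta := by
    rw [hta] at heq
    have h2 : (τ' - ta) • v = 0 := by
      have h3 := congrArg (fun z => z - (o₀ + ta • v)) heq
      simp only [sub_self] at h3
      rw [← h3, sub_smul]
      abel
    rcases smul_eq_zero.mp h2 with h3 | h3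
    · linarith [sub_eq_zero.mp (by linarith [h3] : τ' - ta = (0:ℝ))]
    · exact absurd h3 hv
  have hMv : ⟪o₀ - o, v⟫ + ta * ⟪v, v⟫ = 0 := by
    rw [hτ'] at hτ
    have sc : ∀ Mv V : ℝ, V ≠ 0 → -2 * Mv / V - ta = ta → Mv + ta * V = 0 := by
      intro Mv V hV h
      field_simp at h
      linarith
    exact sc _ _ (ne_of_gt hVpos) hτ
  have e : o - a = -(o₀ - o) - ta • v := by rw [hta]; abel
  have hc : ⟪v, o₀ - o⟫ = ⟪o₀ - o, v⟫ := real_inner_comm _ _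
  rw [e, inner_sub_right, inner_neg_right, real_inner_smul_right, hc]
  linarith

/-- Converse of the projective butterfly theorem, tangent case: if the line `ℓ` is tangent
to the circle at `a` and carries points `p, q, r, s ≠ a` whose coordinates satisfy
`1/(t_a − t_p) − 1/(t_a − t_q) = 1/(t_a − t_s) − 1/(t_a − t_r)`, then
`I_s ∘ I_r ∘ I_q ∘ I_p` is the identity on the circle. -/
theorem projective_butterfly_tangent_converse
    (o : E2) (ρ : ℝ) (hρ : 0 < ρ)
    -- the line ℓ, parametrized by `o₀` and `v`
    (o₀ v : E2) (hv : v ≠ 0)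
    -- ℓ is tangent to the circle at `a`
    (a : E2)
    (htangent : {w : E2 | ∃ τ : ℝ, w = o₀ + τ • v} ∩ sphere o ρ = {a})
    (p q r s : E2)
    (hpa : p ≠ a) (hqa : q ≠ a) (hra : r ≠ a) (hsa : s ≠ a)
    -- coordinates of `a, p, q, r, s` on ℓ
    (ta tp tq tr ts : ℝ)
    (hta : a = o₀ + ta • v)
    (htp : p = o₀ + tp • v) (htq : q = o₀ + tq • v)
    (htr : r = o₀ + tr • v) (hts : s = o₀ + ts • v)
    -- the tangency condition on the coordinates
    (hcond : 1 / (ta - tp) - 1 / (ta - tq) = 1 / (ta - ts) - 1 / (ta - tr))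
    (Ip Iq Ir Is : E2 → E2)
    (hIp : ChordMap o ρ p Ip) (hIq : ChordMap o ρ q Iq)
    (hIr : ChordMap o ρ r Ir) (hIs : ChordMap o ρ s Is) :
    ∀ x ∈ sphere o ρ, Is (Ir (Iq (Ip x))) = x := by
  have haS : a ∈ sphere o ρ := by
    have h : a ∈ ({a} : Set E2) := rfl
    rw [← htangent] at h
    exact h.2
  have hvn : ⟪v, o - a⟫ = 0 := tangent_perp hρ hv htangent hta haS
  obtain ⟨hcp, hpc, hpS⟩ := line_pt htangent hta htp hpa
  obtain ⟨hcq, hqc, hqS⟩ := line_pt htangent hta htq hqa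
  obtain ⟨hcr, hrc, hrS⟩ := line_pt htangent hta htr hra
  obtain ⟨hcs, hsc, hsS⟩ := line_pt htangent hta hts hsa
  intro x hx
  by_cases hxa : x = a
  · subst hxa
    rw [chord_fix hρ haS hvn hpc hpS hIp, chord_fix hρ haS hvn hqc hqS hIq,
      chord_fix hρ haS hvn hrc hrS hIr, chord_fix hρ haS hvn hsc hsS hIs]
  · have hxB := B_ne_zero hρ.le haS hx hxa
    have s1 := step_u hρ hv haS hvn hcp hpc hpS hIp hx hxB
    have s2 := step_u hρ hv haS hvn hcq hqc hqS hIq s1.1 s1.2.1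
    have s3 := step_u hρ hv haS hvn hcr hrc hrS hIr s2.1 s2.2.1
    have s4 := step_u hρ hv haS hvn hcs hsc hsS hIs s3.1 s3.2.1
    apply u_inj hρ hv haS hvn s4.1 hx s4.2.1 hxB
    rw [s4.2.2, s3.2.2, s2.2.2, s1.2.2]
    -- arithmetic from hcond
    have e1 : 1 / (ta - tp) = -(1 / (tp - ta)) := by
      rw [show ta - tp = -(tp - ta) by ring, div_neg]
    have e2 : 1 / (ta - tq) = -(1 / (tq - ta)) := by
      rw [show ta - tq = -(tq - ta) by ring, div_neg]
    have e3 : 1 / (ta - tr) = -(1 / (tr - ta)) := by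
      rw [show ta - tr = -(tr - ta) by ring, div_neg]
    have e4 : 1 / (ta - ts) = -(1 / (ts - ta)) := by
      rw [show ta - ts = -(ts - ta) by ring, div_neg]
    rw [e1, e2, e3, e4] at hcond
    have f1 : (2:ℝ) / (tp - ta) = 2 * (1 / (tp - ta)) := by ring
    have f2 : (2:ℝ) / (tq - ta) = 2 * (1 / (tq - ta)) := by ring
    have f3 : (2:ℝ) / (tr - ta) = 2 * (1 / (tr - ta)) := by ring
    have f4 : (2:ℝ) / (ts - ta) = 2 * (1 / (ts - ta)) := by ring
    rw [f1, f2, f3, f4]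
    linarith
end

section
/- Let ℓ be a line in E, let a, b, c, d ∈ ℓ be points with b ≠ c and a ≠ d, and let x be a point not on ℓ. Then cr(a,b;c,d) = (sin(∡ a x c) · sin(∡ b x d)) / (sin(∡ b x c) · sin(∡ a x d)), where the sines of the oriented angles in the denominators are nonzero because x is not collinear with the corresponding pairs of distinct points of ℓ. -/
open Metric EuclideanGeometry

/-- The cross-ratio of four collinear points, in terms of their coordinates with respect to
an affine parametrization of their common line. -/
noncomputable def crossRatio (ta tb tc td : ℝ) : ℝ :=
  ((ta - tc) / (tb - tc)) * ((tb - td) / (ta - td))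

lemma ratio_calc (A na nb nc nd ta tb tc td : ℝ) (hA : A ≠ 0)
    (hna : na ≠ 0) (hnb : nb ≠ 0) (hnc : nc ≠ 0) (hnd : nd ≠ 0)
    (h3 : tb - tc ≠ 0) (h4 : ta - td ≠ 0) :
    ((ta - tc) / (tb - tc)) * ((tb - td) / (ta - td)) =
      ((tc - ta) * A / (na * nc) * ((td - tb) * A / (nb * nd))) /
        ((tc - tb) * A / (nb * nc) * ((td - ta) * A / (na * nd))) := by
  have h1 : tc - tb ≠ 0 := fun h => h3 (by linarith [sub_eq_zero.mp h])
  have h2 : td - ta ≠ 0 := fun h => h4 (by linarith [sub_eq_zero.mp h])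
  field_simp
  ring

lemma sin_oangle_eq_areaForm_div [Fact (Module.finrank ℝ E2 = 2)]
    (o : Orientation ℝ E2 (Fin 2)) (u w : E2) :
    (o.oangle u w).sin = o.areaForm u w / (‖u‖ * ‖w‖) := by
  by_cases hu : u = 0
  · simp [hu]
  by_cases hw : w = 0
  · simp [hw]
  rw [Orientation.oangle, Real.Angle.sin_coe, Complex.sin_arg, o.norm_kahler]
  congr 1
  simp [Orientation.kahler_apply_apply]


/-- The cross-ratio of four collinear points `a, b, c, d` equals the "sine cross-ratio" of
the four lines joining them to any point `x` not on their common line. -/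
theorem crossRatio_eq_sin_ratio
    [Fact (Module.finrank ℝ E2 = 2)] [Module.Oriented ℝ E2 (Fin 2)]
    -- the line ℓ, parametrized by `o₀` and `v`
    (o₀ v : E2) (hv : v ≠ 0)
    (a b c d : E2)
    (ta tb tc td : ℝ)
    (hta : a = o₀ + ta • v) (htb : b = o₀ + tb • v)
    (htc : c = o₀ + tc • v) (htd : d = o₀ + td • v)
    (hbc : b ≠ c) (had : a ≠ d)
    -- `x` does not lie on ℓ
    (x : E2) (hx : ∀ τ : ℝ, x ≠ o₀ + τ • v) :
    crossRatio ta tb tc td =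
      ((∡ a x c).sin * (∡ b x d).sin) / ((∡ b x c).sin * (∡ a x d).sin) := by
  set o : Orientation ℝ E2 (Fin 2) := Module.Oriented.positiveOrientation with ho
  have hw0 : o₀ - x ≠ 0 := by
    intro h
    apply hx 0
    rw [zero_smul, add_zero]
    exact (sub_eq_zero.mp h).symm
  have key : ∀ r : ℝ, r • v ≠ o₀ - x := by
    intro r hr
    apply hx (-r)
    rw [neg_smul, ← sub_eq_add_neg, hr]
    abel
  have hAne : o.areaForm (o₀ - x) v ≠ 0 := by
    intro h0
    rcases le_or_gt 0 (inner ℝ (o₀ - x) v : ℝ) with hi | hi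
    · have hsr : SameRay ℝ (o₀ - x) v :=
        (o.nonneg_inner_and_areaForm_eq_zero_iff_sameRay (o₀ - x) v).mp ⟨hi, h0⟩
      obtain ⟨r, _, hr⟩ := hsr.exists_nonneg_right hv
      exact key r hr.symm
    · have hsr : SameRay ℝ (o₀ - x) (-v) := by
        apply (o.nonneg_inner_and_areaForm_eq_zero_iff_sameRay (o₀ - x) (-v)).mp
        refine ⟨by rw [inner_neg_right]; linarith, by rw [map_neg, h0, neg_zero]⟩
      obtain ⟨r, _, hr⟩ := hsr.exists_nonneg_right (neg_ne_zero.mpr hv)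
      apply key (-r)
      rw [neg_smul, ← smul_neg, ← hr]
  have htbc : tb ≠ tc := fun h => hbc (by rw [htb, htc, h])
  have htad : ta ≠ td := fun h => had (by rw [hta, htd, h])
  have hvs : ∀ (p : E2) (t : ℝ), p = o₀ + t • v → p -ᵥ x = (o₀ - x) + t • v := by
    intro p t hp
    rw [vsub_eq_sub, hp]
    abel
  have hne : ∀ (p : E2) (t : ℝ), p = o₀ + t • v → ‖p -ᵥ x‖ ≠ 0 := by
    intro p t hp
    simp only [ne_eq, norm_eq_zero, vsub_eq_zero_iff_eq]
    intro h; exact hx t (h ▸ hp)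
  have harea : ∀ s t : ℝ,
      o.areaForm ((o₀ - x) + s • v) ((o₀ - x) + t • v) = (t - s) * o.areaForm (o₀ - x) v := by
    intro s t
    have h1 : o.areaForm v (o₀ - x) = -o.areaForm (o₀ - x) v := o.areaForm_swap v (o₀ - x)
    simp only [map_add, map_smul, LinearMap.add_apply, LinearMap.smul_apply,
      Orientation.areaForm_apply_self, smul_eq_mul, h1]
    ring
  have hsin : ∀ (p q : E2) (s t : ℝ), p = o₀ + s • v → q = o₀ + t • v →
      (∡ p x q).sin = (t - s) * o.areaForm (o₀ - x) v / (‖p -ᵥ x‖ * ‖q -ᵥ x‖) := by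
    intro p q s t hp hq
    rw [EuclideanGeometry.oangle, sin_oangle_eq_areaForm_div, hvs p s hp, hvs q t hq,
      harea, ← hvs p s hp, ← hvs q t hq]
  rw [hsin a c ta tc hta htc, hsin b d tb td htb htd, hsin b c tb tc htb htc,
    hsin a d ta td hta htd]
  have hna := hne a ta hta
  have hnb := hne b tb htb
  have hnc := hne c tc htc
  have hnd := hne d td htd
  have h1 : tc - tb ≠ 0 := sub_ne_zero.mpr (Ne.symm htbc)
  have h2 : td - ta ≠ 0 := sub_ne_zero.mpr (Ne.symm htad)
  have h3 : tb - tc ≠ 0 := sub_ne_zero.mpr htbc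
  have h4 : ta - td ≠ 0 := sub_ne_zero.mpr htad
  rw [crossRatio]
  exact ratio_calc _ _ _ _ _ _ _ _ _ hAne hna hnb hnc hnd h3 h4
end

section
/- Let x ∈ E and let ℓ and ℓ' be two lines, neither passing through x. Let a, b, c, d ∈ ℓ with b ≠ c and a ≠ d, and let a', b', c', d' ∈ ℓ' with b' ≠ c' and a' ≠ d', be such that x, a, a' are collinear, x, b, b' are collinear, x, c, c' are collinear, and x, d, d' are collinear. Then cr(a,b;c,d) = cr(a',b';c',d') (central projection from x preserves the cross-ratio of collinear points). -/
noncomputable def det2 (p q : E2) : ℝ := p 0 * q 1 - p 1 * q 0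

lemma lemA {p q : E2} (hp : p ≠ 0) (h : det2 p q = 0) : ∃ μ : ℝ, q = μ • p := by
  have hp01 : p 0 ≠ 0 ∨ p 1 ≠ 0 := by
    by_contra hc
    push_neg at hc
    exact hp (by ext i; fin_cases i <;> simp [hc.1, hc.2])
  rcases hp01 with h0 | h1
  · refine ⟨q 0 / p 0, ?_⟩
    ext i
    fin_cases i <;> simp [PiLp.smul_apply, smul_eq_mul] <;> field_simp <;>
      simp only [det2] at h <;> linarith [h]
  · refine ⟨q 1 / p 1, ?_⟩
    ext i
    fin_cases i <;> simp [PiLp.smul_apply, smul_eq_mul] <;> field_simp <;>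
      simp only [det2] at h <;> linarith [h]

lemma lemB {x p q : E2} (h : Collinear ℝ ({x, p, q} : Set E2)) :
    det2 (p - x) (q - x) = 0 := by
  rw [collinear_iff_of_mem (Set.mem_insert x {p, q})] at h
  obtain ⟨w, hw⟩ := h
  obtain ⟨rp, hrp⟩ := hw p (by simp)
  obtain ⟨rq, hrq⟩ := hw q (by simp)
  have h1 : p - x = rp • w := by rw [hrp, vadd_eq_add]; abel
  have h2 : q - x = rq • w := by rw [hrq, vadd_eq_add]; abel
  rw [h1, h2]
  simp [det2, PiLp.smul_apply, smul_eq_mul]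
  ring

lemma lemC (p q r w : E2) (t s : ℝ) :
    det2 (p + t • q) (r + s • w) =
      det2 p r + t * det2 q r + s * det2 p w + t * s * det2 q w := by
  simp [det2, PiLp.add_apply, PiLp.smul_apply, smul_eq_mul]
  ring

lemma lemD (p q w : E2) (t : ℝ) : det2 (p + t • q) w = det2 p w + t * det2 q w := by
  simp [det2, PiLp.add_apply, PiLp.smul_apply, smul_eq_mul]
  ring

/-- If `p ≠ 0`, `det2 v' u' ≠ 0` (x not on ℓ'), and `p` is parallel to `u' + s • v'`,
then `det2 p v' ≠ 0`. -/
lemma lemQ {u' v' p : E2} (hp : p ≠ 0) (hvu' : det2 v' u' ≠ 0) {s : ℝ}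
    (hcol : det2 p (u' + s • v') = 0) : det2 p v' ≠ 0 := by
  intro h0
  obtain ⟨μ, hμ⟩ := lemA hp h0
  obtain ⟨ν, hν⟩ := lemA hp hcol
  apply hvu'
  have hu' : u' = (ν - s * μ) • p := by
    have : u' = ν • p - s • v' := by rw [← hν]; abel
    rw [this, hμ]; module
  rw [hμ, hu']
  simp [det2, PiLp.smul_apply, smul_eq_mul]
  ring

/-- Central projection from a point `x` preserves the cross-ratio of collinear points:
if `a, b, c, d` lie on a line `ℓ` and `a', b', c', d'` lie on a line `ℓ'`, neither line
passing through `x`, and `x, a, a'` are collinear (and likewise for `b, c, d`), then the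
two cross-ratios agree. -/
theorem centralProjection_preserves_crossRatio
    (x : E2)
    -- the line ℓ, parametrized by `o₀` and `v`, not through `x`
    (o₀ v : E2) (hv : v ≠ 0) (hx : ∀ τ : ℝ, x ≠ o₀ + τ • v)
    -- the line ℓ', parametrized by `o₀'` and `v'`, not through `x`
    (o₀' v' : E2) (hv' : v' ≠ 0) (hx' : ∀ τ : ℝ, x ≠ o₀' + τ • v')
    (a b c d a' b' c' d' : E2)
    (ta tb tc td ta' tb' tc' td' : ℝ)
    (hta : a = o₀ + ta • v) (htb : b = o₀ + tb • v)
    (htc : c = o₀ + tc • v) (htd : d = o₀ + td • v)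
    (hta' : a' = o₀' + ta' • v') (htb' : b' = o₀' + tb' • v')
    (htc' : c' = o₀' + tc' • v') (htd' : d' = o₀' + td' • v')
    (hbc : b ≠ c) (had : a ≠ d) (hbc' : b' ≠ c') (had' : a' ≠ d')
    (hxa : Collinear ℝ ({x, a, a'} : Set E2))
    (hxb : Collinear ℝ ({x, b, b'} : Set E2))
    (hxc : Collinear ℝ ({x, c, c'} : Set E2))
    (hxd : Collinear ℝ ({x, d, d'} : Set E2)) :
    crossRatio ta tb tc td = crossRatio ta' tb' tc' td' := by
  set u : E2 := o₀ - x with hu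
  set u' : E2 := o₀' - x with hu'
  -- x not on ℓ' in det form
  have hvu' : det2 v' u' ≠ 0 := by
    intro h
    obtain ⟨μ, hμ⟩ := lemA hv' h
    exact hx' (-μ) (by rw [hu'] at hμ; rw [neg_smul, ← hμ]; abel)
  -- points minus x
  have key : ∀ (p p' : E2) (t s : ℝ), p = o₀ + t • v → p' = o₀' + s • v' →
      Collinear ℝ ({x, p, p'} : Set E2) →
      (p - x = u + t • v ∧ p' - x = u' + s • v' ∧
        det2 (u + t • v) (u' + s • v') = 0) := by
    intro p p' t s hp hp' hcol
    have h1 : p - x = u + t • v := by rw [hp, hu]; abel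
    have h2 : p' - x = u' + s • v' := by rw [hp', hu']; abel
    exact ⟨h1, h2, by rw [← h1, ← h2]; exact lemB hcol⟩
  obtain ⟨ha1, ha2, hda⟩ := key a a' ta ta' hta hta' hxa
  obtain ⟨hb1, hb2, hdb⟩ := key b b' tb tb' htb htb' hxb
  obtain ⟨hc1, hc2, hdc⟩ := key c c' tc tc' htc htc' hxc
  obtain ⟨hd1, hd2, hdd⟩ := key d d' td td' htd htd' hxd
  rw [lemC] at hda hdb hdc hdd
  set D := det2 u u' with hD
  set A := det2 v u' with hA
  set B := det2 u v' with hB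
  set G := det2 v v' with hG
  -- q_k ≠ 0
  have hq : ∀ (t s : ℝ), det2 (u + t • v) (u' + s • v') = 0 → B + t * G ≠ 0 := by
    intro t s hcol hq0
    have hp0 : u + t • v ≠ 0 := by
      intro h
      apply hx t
      have : x = o₀ + t • v - (u + t • v) := by rw [hu]; abel
      rw [this, h, sub_zero]
    have hd2v : det2 (u + t • v) v' = 0 := by
      rw [lemD]
      rw [hB, hG] at hq0
      linarith [hq0]
    exact lemQ hp0 hvu' hcol hd2v
  have hqa : B + ta * G ≠ 0 := hq ta ta' (by rw [lemC]; exact hda)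
  have hqb : B + tb * G ≠ 0 := hq tb tb' (by rw [lemC]; exact hdb)
  have hqc : B + tc * G ≠ 0 := hq tc tc' (by rw [lemC]; exact hdc)
  have hqd : B + td * G ≠ 0 := hq td td' (by rw [lemC]; exact hdd)
  -- scalar inequalities
  have hvne : ∀ (p p' : E2) (t s : ℝ), p = o₀ + t • v → p' = o₀ + s • v → p ≠ p' → t ≠ s := by
    intro p p' t s hp hp' hne he
    exact hne (by rw [hp, hp', he])
  have hvne' : ∀ (p p' : E2) (t s : ℝ), p = o₀' + t • v' → p' = o₀' + s • v' → p ≠ p' → t ≠ s := by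
    intro p p' t s hp hp' hne he
    exact hne (by rw [hp, hp', he])
  have htbc : tb - tc ≠ 0 := sub_ne_zero.mpr (hvne b c tb tc htb htc hbc)
  have htad : ta - td ≠ 0 := sub_ne_zero.mpr (hvne a d ta td hta htd had)
  have htbc' : tb' - tc' ≠ 0 := sub_ne_zero.mpr (hvne' b' c' tb' tc' htb' htc' hbc')
  have htad' : ta' - td' ≠ 0 := sub_ne_zero.mpr (hvne' a' d' ta' td' hta' htd' had')
  -- key relations
  have Rac : (ta' - tc') * ((B + ta * G) * (B + tc * G)) = (ta - tc) * (D * G - A * B) := by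
    linear_combination (B + tc * G) * hda - (B + ta * G) * hdc
  have Rbc : (tb' - tc') * ((B + tb * G) * (B + tc * G)) = (tb - tc) * (D * G - A * B) := by
    linear_combination (B + tc * G) * hdb - (B + tb * G) * hdc
  have Rbd : (tb' - td') * ((B + tb * G) * (B + td * G)) = (tb - td) * (D * G - A * B) := by
    linear_combination (B + td * G) * hdb - (B + tb * G) * hdd
  have Rad : (ta' - td') * ((B + ta * G) * (B + td * G)) = (ta - td) * (D * G - A * B) := by
    linear_combination (B + td * G) * hda - (B + ta * G) * hdd
  have hK : D * G - A * B ≠ 0 := by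
    intro h
    rw [h, mul_zero] at Rbc
    have := mul_eq_zero.mp Rbc
    rcases this with h1 | h2
    · exact htbc' h1
    · exact mul_ne_zero hqb hqc h2
  -- finish
  have e1 : ta' - tc' = (ta - tc) * (D * G - A * B) / ((B + ta * G) * (B + tc * G)) := by
    field_simp
    linarith [Rac]
  have e2 : tb' - tc' = (tb - tc) * (D * G - A * B) / ((B + tb * G) * (B + tc * G)) := by
    field_simp
    linarith [Rbc]
  have e3 : tb' - td' = (tb - td) * (D * G - A * B) / ((B + tb * G) * (B + td * G)) := by
    field_simp
    linarith [Rbd]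
  have e4 : ta' - td' = (ta - td) * (D * G - A * B) / ((B + ta * G) * (B + td * G)) := by
    field_simp
    linarith [Rad]
  unfold crossRatio
  rw [e1, e2, e3, e4]
  field_simp
end

section
/- Let a, b, c, d be four pairwise distinct points on the circle C, and let x and x' be two points of C, each distinct from a, b, c, d. Then (sin(∡ a x c) · sin(∡ b x d)) / (sin(∡ b x c) · sin(∡ a x d)) = (sin(∡ a x' c) · sin(∡ b x' d)) / (sin(∡ b x' c) · sin(∡ a x' d)); that is, the cross-ratio of four points on a circle, defined by viewing them from a fifth point of the circle, does not depend on the choice of that fifth point. -/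
open Metric EuclideanGeometry

private lemma sin_shift_aux (θ ψ : Real.Angle) (h : θ = ψ ∨ θ = ψ + Real.pi) :
    ∃ e : ℝ, e * e = 1 ∧ ∀ δ : Real.Angle, (θ + δ).sin = e * (ψ + δ).sin := by
  rcases h with rfl | rfl
  · exact ⟨1, by norm_num, fun δ => by rw [one_mul]⟩
  · exact ⟨-1, by norm_num, fun δ => by
      rw [add_right_comm, Real.Angle.sin_add_pi]; ring⟩

private lemma crossratio_sin_key (α β γ u v w : Real.Angle)
    (hu : u = α ∨ u = α + Real.pi) (hv : v = β ∨ v = β + Real.pi)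
    (hw : w = γ ∨ w = γ + Real.pi) :
    ((u + v).sin * (v + w).sin) / (v.sin * (u + (v + w)).sin) =
      ((α + β).sin * (β + γ).sin) / (β.sin * (α + (β + γ)).sin) := by
  obtain ⟨eu, heu2, heu⟩ := sin_shift_aux u α hu
  obtain ⟨ev, hev2, hev⟩ := sin_shift_aux v β hv
  obtain ⟨ew, hew2, hew⟩ := sin_shift_aux w γ hw
  have h1 : (u + v).sin = eu * (ev * (α + β).sin) := by
    rw [heu v, show α + v = v + α by abel, hev α, show β + α = α + β by abel]
  have h2 : (v + w).sin = ev * (ew * (β + γ).sin) := by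
    rw [hev w, show β + w = w + β by abel, hew β, show γ + β = β + γ by abel]
  have h3 : v.sin = ev * β.sin := by
    have := hev 0; rwa [add_zero, add_zero] at this
  have h4 : (u + (v + w)).sin = eu * (ev * (ew * (α + (β + γ)).sin)) := by
    calc (u + (v + w)).sin = eu * (α + (v + w)).sin := heu _
      _ = eu * (v + (w + α)).sin := by rw [show α + (v + w) = v + (w + α) by abel]
      _ = eu * (ev * (β + (w + α)).sin) := by rw [hev]
      _ = eu * (ev * (w + (α + β)).sin) := by rw [show β + (w + α) = w + (α + β) by abel]
      _ = eu * (ev * (ew * (γ + (α + β)).sin)) := by rw [hew]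
      _ = eu * (ev * (ew * (α + (β + γ)).sin)) := by
          rw [show γ + (α + β) = α + (β + γ) by abel]
  have hk : eu * ev * (ev * ew) ≠ 0 := by
    have h1' : eu ≠ 0 := fun h => by simp [h] at heu2
    have h2' : ev ≠ 0 := fun h => by simp [h] at hev2
    have h3' : ew ≠ 0 := fun h => by simp [h] at hew2
    positivity
  rw [h1, h2, h3, h4,
    show eu * (ev * (α + β).sin) * (ev * (ew * (β + γ).sin)) =
      (eu * ev * (ev * ew)) * ((α + β).sin * (β + γ).sin) by ring,
    show ev * (β).sin * (eu * (ev * (ew * (α + (β + γ)).sin))) =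
      (eu * ev * (ev * ew)) * ((β).sin * (α + (β + γ)).sin) by ring,
    mul_div_mul_left _ _ hk]

/-- The cross-ratio of four points `a, b, c, d` on a circle, defined by viewing them from a
fifth point of the circle via sines of oriented angles, does not depend on the choice of
that fifth point. -/
theorem crossRatio_on_circle_well_defined
    [Fact (Module.finrank ℝ E2 = 2)] [Module.Oriented ℝ E2 (Fin 2)]
    (o : E2) (ρ : ℝ) (hρ : 0 < ρ)
    (a b c d : E2)
    (haC : a ∈ sphere o ρ) (hbC : b ∈ sphere o ρ)
    (hcC : c ∈ sphere o ρ) (hdC : d ∈ sphere o ρ)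
    (hab : a ≠ b) (hac : a ≠ c) (had : a ≠ d)
    (hbc : b ≠ c) (hbd : b ≠ d) (hcd : c ≠ d)
    (x x' : E2) (hxC : x ∈ sphere o ρ) (hx'C : x' ∈ sphere o ρ)
    (hxa : x ≠ a) (hxb : x ≠ b) (hxc : x ≠ c) (hxd : x ≠ d)
    (hx'a : x' ≠ a) (hx'b : x' ≠ b) (hx'c : x' ≠ c) (hx'd : x' ≠ d) :
    ((∡ a x c).sin * (∡ b x d).sin) / ((∡ b x c).sin * (∡ a x d).sin) =
      ((∡ a x' c).sin * (∡ b x' d).sin) / ((∡ b x' c).sin * (∡ a x' d).sin) := by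
  set s : EuclideanGeometry.Sphere E2 := ⟨o, ρ⟩ with hs
  have hmem : ∀ p : E2, p ∈ Metric.sphere o ρ → p ∈ s := fun p hp => hp
  have hu := Real.Angle.two_zsmul_eq_iff.mp
    (EuclideanGeometry.Sphere.two_zsmul_oangle_eq (hmem a haC) (hmem x hxC)
      (hmem x' hx'C) (hmem b hbC) hxa hxb hx'a hx'b)
  have hv := Real.Angle.two_zsmul_eq_iff.mp
    (EuclideanGeometry.Sphere.two_zsmul_oangle_eq (hmem b hbC) (hmem x hxC)
      (hmem x' hx'C) (hmem c hcC) hxb hxc hx'b hx'c)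
  have hw := Real.Angle.two_zsmul_eq_iff.mp
    (EuclideanGeometry.Sphere.two_zsmul_oangle_eq (hmem c hcC) (hmem x hxC)
      (hmem x' hx'C) (hmem d hdC) hxc hxd hx'c hx'd)
  rw [show ∡ a x c = ∡ a x b + ∡ b x c from
      (EuclideanGeometry.oangle_add hxa.symm hxb.symm hxc.symm).symm,
    show ∡ b x d = ∡ b x c + ∡ c x d from
      (EuclideanGeometry.oangle_add hxb.symm hxc.symm hxd.symm).symm,
    show ∡ a x d = ∡ a x b + (∡ b x c + ∡ c x d) from by
      rw [EuclideanGeometry.oangle_add hxb.symm hxc.symm hxd.symm,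
        EuclideanGeometry.oangle_add hxa.symm hxb.symm hxd.symm],
    show ∡ a x' c = ∡ a x' b + ∡ b x' c from
      (EuclideanGeometry.oangle_add hx'a.symm hx'b.symm hx'c.symm).symm,
    show ∡ b x' d = ∡ b x' c + ∡ c x' d from
      (EuclideanGeometry.oangle_add hx'b.symm hx'c.symm hx'd.symm).symm,
    show ∡ a x' d = ∡ a x' b + (∡ b x' c + ∡ c x' d) from by
      rw [EuclideanGeometry.oangle_add hx'b.symm hx'c.symm hx'd.symm,
        EuclideanGeometry.oangle_add hx'a.symm hx'b.symm hx'd.symm]]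
  exact crossratio_sin_key _ _ _ _ _ _ hu hv hw
end

section
/- Suppose the line ℓ meets the circle C in two distinct points a and b. Let x, y, z, t ∈ C, none lying on ℓ, and let p, q, r, s be points of ℓ lying strictly inside C (dist(p, o) < ρ, etc.) such that p lies on the line xy, q on the line yz, r on the line zt, and s on the line tx. Then (1/2)·|log cr(a,b;p,q)| = (1/2)·|log cr(a,b;s,r)|; that is, the segments pq and rs have equal length in the Cayley–Klein model of the hyperbolic plane inside C. -/
open Metric

set_option maxHeartbeats 2000000 in
/-- Scalar heart of the argument: a chord `xy` of the circle through the point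
`p = o₀ + tp•v` of the line through `a = o₀ + ta•v` and `b = o₀ + tb•v` (both on the circle)
satisfies the squared cross-ratio relation. -/
theorem key_scalar (m0 m1 c0 c1 v0 v1 x0 x1 y0 y1 ρ ta tb tp lam : ℝ)
    (hv : v0^2 + v1^2 ≠ 0) (hab : ta - tb ≠ 0) (hlam : lam ≠ 0)
    (ha2 : (c0 + ta*v0 - m0)^2 + (c1 + ta*v1 - m1)^2 = ρ^2)
    (hb2 : (c0 + tb*v0 - m0)^2 + (c1 + tb*v1 - m1)^2 = ρ^2)
    (hx2 : (x0 - m0)^2 + (x1 - m1)^2 = ρ^2)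
    (hy2 : (y0 - m0)^2 + (y1 - m1)^2 = ρ^2)
    (hl0 : lam*(y0 - x0) + x0 = c0 + tp*v0)
    (hl1 : lam*(y1 - x1) + x1 = c1 + tp*v1) :
    (tp - ta)^2 * (((x0 - m0)*(c0 + tb*v0 - m0) + (x1 - m1)*(c1 + tb*v1 - m1) - ρ^2) *
                   ((y0 - m0)*(c0 + tb*v0 - m0) + (y1 - m1)*(c1 + tb*v1 - m1) - ρ^2)) =
    (tp - tb)^2 * (((x0 - m0)*(c0 + ta*v0 - m0) + (x1 - m1)*(c1 + ta*v1 - m1) - ρ^2) *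
                   ((y0 - m0)*(c0 + ta*v0 - m0) + (y1 - m1)*(c1 + ta*v1 - m1) - ρ^2)) := by
  obtain ⟨n, hn⟩ : ∃ X : ℝ, X = v0^2 + v1^2 := ⟨_, rfl⟩
  obtain ⟨σ, hσ⟩ : ∃ X : ℝ, X = ((x0 - (c0 + tp*v0))*v0 + (x1 - (c1 + tp*v1))*v1)/n := ⟨_, rfl⟩
  obtain ⟨g, hg⟩ : ∃ X : ℝ, X = ((x1 - (c1 + tp*v1))*v0 - (x0 - (c0 + tp*v0))*v1)/n := ⟨_, rfl⟩
  obtain ⟨μ, hμ⟩ : ∃ X : ℝ, X = (lam - 1)/lam := ⟨_, rfl⟩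
  obtain ⟨al, hal⟩ : ∃ X : ℝ, X = ((c0 + tp*v0) - m0)*v0 + ((c1 + tp*v1) - m1)*v1 := ⟨_, rfl⟩
  obtain ⟨be, hbe⟩ : ∃ X : ℝ, X = ((c1 + tp*v1) - m1)*v0 - ((c0 + tp*v0) - m0)*v1 := ⟨_, rfl⟩
  obtain ⟨EE, hEE⟩ : ∃ X : ℝ, X = ((c0 + tp*v0) - m0)^2 + ((c1 + tp*v1) - m1)^2 - ρ^2 := ⟨_, rfl⟩
  have s1 : x0 - (c0 + tp*v0) = σ*v0 - g*v1 := by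
    rw [hσ, hg, hn]; field_simp; ring
  have s2 : x1 - (c1 + tp*v1) = σ*v1 + g*v0 := by
    rw [hσ, hg, hn]; field_simp; ring
  have s3a : y0 - (c0 + tp*v0) = μ*(x0 - (c0 + tp*v0)) := by
    rw [hμ]; field_simp; linear_combination hl0
  have s4a : y1 - (c1 + tp*v1) = μ*(x1 - (c1 + tp*v1)) := by
    rw [hμ]; field_simp; linear_combination hl1
  have s3 : y0 - (c0 + tp*v0) = μ*σ*v0 - μ*g*v1 := by linear_combination s3a + μ*s1
  have s4 : y1 - (c1 + tp*v1) = μ*σ*v1 + μ*g*v0 := by linear_combination s4a + μ*s2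
  have hga : EE + 2*(ta - tp)*al + (ta - tp)^2*n = 0 := by
    rw [hEE, hal, hn]; linear_combination ha2
  have hgb : EE + 2*(tb - tp)*al + (tb - tp)^2*n = 0 := by
    rw [hEE, hal, hn]; linear_combination hb2
  have hal2 : 2*al + ((ta - tp) + (tb - tp))*n = 0 := by
    have h := mul_eq_zero.mp (show (ta - tb)*(2*al + ((ta - tp) + (tb - tp))*n) = 0 by
      linear_combination hga - hgb)
    exact h.resolve_left hab
  have hE : EE = (ta - tp)*(tb - tp)*n := by linear_combination hga - (ta - tp)*hal2
  have hgx : EE + 2*σ*al + 2*g*be + (σ^2 + g^2)*n = 0 := by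
    rw [hEE, hal, hbe, hn]
    linear_combination hx2 - (x0 - m0 + ((c0 + tp*v0) - m0) + σ*v0 - g*v1)*s1
      - (x1 - m1 + ((c1 + tp*v1) - m1) + σ*v1 + g*v0)*s2
  have hgy : EE + 2*(μ*σ)*al + 2*(μ*g)*be + μ^2*(σ^2 + g^2)*n = 0 := by
    rw [hEE, hal, hbe, hn]
    linear_combination hy2 - (y0 - m0 + ((c0 + tp*v0) - m0) + μ*σ*v0 - μ*g*v1)*s3
      - (y1 - m1 + ((c1 + tp*v1) - m1) + μ*σ*v1 + μ*g*v0)*s4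
  have hstarx : n*((σ - (ta - tp))*(σ - (tb - tp))) + n*g^2 + 2*g*be = 0 := by
    linear_combination hgx - hE - σ*hal2
  have hstary : n*((μ*σ - (ta - tp))*(μ*σ - (tb - tp))) + n*(μ*g)^2 + 2*(μ*g)*be = 0 := by
    linear_combination hgy - hE - μ*σ*hal2
  have hXX : n*((1 - μ)*(μ*(σ^2 + g^2) - (ta - tp)*(tb - tp))) = 0 := by
    linear_combination μ*hstarx - hstary
  have hn0 : n ≠ 0 := by rw [hn]; exact hv
  have hμ1 : (1:ℝ) - μ ≠ 0 := by
    have h : (1:ℝ) - μ = 1/lam := by rw [hμ]; field_simp; ring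
    rw [h]; exact one_div_ne_zero hlam
  have hrel : μ*(σ^2 + g^2) = (ta - tp)*(tb - tp) := by
    have h1 := (mul_eq_zero.mp hXX).resolve_left hn0
    have h2 := (mul_eq_zero.mp h1).resolve_left hμ1
    linarith [h2]
  have eXa : ((x0 - m0)*(c0 + ta*v0 - m0) + (x1 - m1)*(c1 + ta*v1 - m1) - ρ^2)
      = -(n*((σ - (ta - tp))^2 + g^2))/2 := by
    linear_combination (1/2)*hx2 + (1/2)*ha2
      - (1/2)*(x0 - (c0 + ta*v0) + (σ - (ta - tp))*v0 - g*v1)*s1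
      - (1/2)*(x1 - (c1 + ta*v1) + (σ - (ta - tp))*v1 + g*v0)*s2
      + ((σ - (ta - tp))^2 + g^2)/2*hn
  have eXb : ((x0 - m0)*(c0 + tb*v0 - m0) + (x1 - m1)*(c1 + tb*v1 - m1) - ρ^2)
      = -(n*((σ - (tb - tp))^2 + g^2))/2 := by
    linear_combination (1/2)*hx2 + (1/2)*hb2
      - (1/2)*(x0 - (c0 + tb*v0) + (σ - (tb - tp))*v0 - g*v1)*s1
      - (1/2)*(x1 - (c1 + tb*v1) + (σ - (tb - tp))*v1 + g*v0)*s2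
      + ((σ - (tb - tp))^2 + g^2)/2*hn
  have eYa : ((y0 - m0)*(c0 + ta*v0 - m0) + (y1 - m1)*(c1 + ta*v1 - m1) - ρ^2)
      = -(n*((μ*σ - (ta - tp))^2 + (μ*g)^2))/2 := by
    linear_combination (1/2)*hy2 + (1/2)*ha2
      - (1/2)*(y0 - (c0 + ta*v0) + (μ*σ - (ta - tp))*v0 - μ*g*v1)*s3
      - (1/2)*(y1 - (c1 + ta*v1) + (μ*σ - (ta - tp))*v1 + μ*g*v0)*s4
      + ((μ*σ - (ta - tp))^2 + (μ*g)^2)/2*hn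
  have eYb : ((y0 - m0)*(c0 + tb*v0 - m0) + (y1 - m1)*(c1 + tb*v1 - m1) - ρ^2)
      = -(n*((μ*σ - (tb - tp))^2 + (μ*g)^2))/2 := by
    linear_combination (1/2)*hy2 + (1/2)*hb2
      - (1/2)*(y0 - (c0 + tb*v0) + (μ*σ - (tb - tp))*v0 - μ*g*v1)*s3
      - (1/2)*(y1 - (c1 + tb*v1) + (μ*σ - (tb - tp))*v1 + μ*g*v0)*s4
      + ((μ*σ - (tb - tp))^2 + (μ*g)^2)/2*hn
  rw [eXa, eXb, eYa, eYb]
  linear_combination (n^2/4) * (-(ta - tp)*(tb - tp)^3 + (ta - tp)^3*(tb - tp)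
    - g^2*μ*(tb - tp)^2 + g^2*μ*(ta - tp)^2
    + 2*σ*(ta - tp)*(tb - tp)^2 - 2*σ*(ta - tp)^2*(tb - tp)
    + 2*σ*μ*(ta - tp)*(tb - tp)^2 - 2*σ*μ*(ta - tp)^2*(tb - tp)
    - σ^2*μ*(tb - tp)^2 + σ^2*μ*(ta - tp)^2) * hrel

/-- Squared distances from the center, for a point on the sphere, in coordinates. -/
theorem sq_sphere {o : E2} {ρ : ℝ} (hρ : 0 ≤ ρ) {u : E2} (h : u ∈ sphere o ρ) :
    (u 0 - o 0)^2 + (u 1 - o 1)^2 = ρ^2 := by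
  have hd : dist u o = ρ := mem_sphere.mp h
  rw [EuclideanSpace.dist_eq] at hd
  have h2 := congrArg (·^2) hd
  simp only at h2
  rw [Real.sq_sqrt (by positivity)] at h2
  simpa [Fin.sum_univ_two, Real.dist_eq, sq_abs] using h2

/-- The polarized form of the circle equation. -/
noncomputable def Bf (o : E2) (ρ : ℝ) (u w : E2) : ℝ :=
  (u 0 - o 0)*(w 0 - o 0) + (u 1 - o 1)*(w 1 - o 1) - ρ^2

/-- For two distinct points of the circle, the polarized form is nonzero (it equals
minus one half of the squared distance between them). -/
theorem Bf_ne {o : E2} {ρ : ℝ} (hρ : 0 ≤ ρ) {u w : E2}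
    (hu : u ∈ sphere o ρ) (hw : w ∈ sphere o ρ) (hne : u ≠ w) : Bf o ρ u w ≠ 0 := by
  have h2 : 2 * Bf o ρ u w = -((u 0 - w 0)^2 + (u 1 - w 1)^2) := by
    simp only [Bf]; linear_combination sq_sphere hρ hu + sq_sphere hρ hw
  intro h0
  rw [h0, mul_zero] at h2
  have e0 : u 0 = w 0 := by nlinarith [sq_nonneg (u 0 - w 0), sq_nonneg (u 1 - w 1)]
  have e1 : u 1 = w 1 := by nlinarith [sq_nonneg (u 0 - w 0), sq_nonneg (u 1 - w 1)]
  exact hne (PiLp.ext fun i => by fin_cases i <;> assumption)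

/-- The parameter of an interior point of the circle differs from the parameter of a
point of the circle. -/
theorem param_ne {o : E2} {ρ : ℝ} {a p o₀ v : E2} {ta tp : ℝ}
    (haC : a ∈ sphere o ρ) (hpin : dist p o < ρ)
    (hta : a = o₀ + ta • v) (htp : p = o₀ + tp • v) : tp ≠ ta := by
  intro h
  have hpa : p = a := by rw [htp, hta, h]
  rw [hpa, mem_sphere.mp haC] at hpin
  exact lt_irrefl _ hpin

/-- Vector-level form of the key chord relation. -/
theorem key_vec (o : E2) {ρ : ℝ} (hρ : 0 < ρ) {a b x y p o₀ v : E2} {ta tb tp : ℝ}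
    (hv : v ≠ 0) (hab : ta ≠ tb)
    (haC : a ∈ sphere o ρ) (hbC : b ∈ sphere o ρ)
    (hxC : x ∈ sphere o ρ) (hyC : y ∈ sphere o ρ)
    (hta : a = o₀ + ta • v) (htb : b = o₀ + tb • v) (htp : p = o₀ + tp • v)
    (hpxy : p ∈ affineSpan ℝ ({x, y} : Set E2)) (hpin : dist p o < ρ) :
    (tp - ta)^2 * (Bf o ρ x b * Bf o ρ y b) = (tp - tb)^2 * (Bf o ρ x a * Bf o ρ y a) := by
  obtain ⟨lam, hlamv⟩ : ∃ lam : ℝ, lam • (y -ᵥ x) +ᵥ x = p := by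
    have hx : x ∈ affineSpan ℝ ({x, y} : Set E2) := left_mem_affineSpan_pair ℝ x y
    have hd := AffineSubspace.vsub_mem_direction hpxy hx
    rw [direction_affineSpan] at hd
    obtain ⟨lam, hlam⟩ := mem_vectorSpan_pair_rev.mp hd
    exact ⟨lam, by rw [hlam]; exact vsub_vadd p x⟩
  have hlam0 : lam ≠ 0 := by
    intro h
    rw [h, zero_smul, zero_vadd] at hlamv
    rw [← hlamv, mem_sphere.mp hxC] at hpin
    exact lt_irrefl _ hpin
  have hv01 : v 0 ^ 2 + v 1 ^ 2 ≠ 0 := by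
    intro h
    apply hv
    have h0 : v 0 = 0 := by nlinarith [sq_nonneg (v 0), sq_nonneg (v 1)]
    have h1 : v 1 = 0 := by nlinarith [sq_nonneg (v 0), sq_nonneg (v 1)]
    exact PiLp.ext fun i => by fin_cases i <;> assumption
  have ha0 : a 0 = o₀ 0 + ta * v 0 := by rw [hta]; simp
  have ha1 : a 1 = o₀ 1 + ta * v 1 := by rw [hta]; simp
  have hb0 : b 0 = o₀ 0 + tb * v 0 := by rw [htb]; simp
  have hb1 : b 1 = o₀ 1 + tb * v 1 := by rw [htb]; simp
  have hl0 : lam * (y 0 - x 0) + x 0 = o₀ 0 + tp * v 0 := by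
    rw [htp] at hlamv
    have h := congrArg (fun u : E2 => u 0) hlamv
    simpa using h
  have hl1 : lam * (y 1 - x 1) + x 1 = o₀ 1 + tp * v 1 := by
    rw [htp] at hlamv
    have h := congrArg (fun u : E2 => u 1) hlamv
    simpa using h
  have ha2 := sq_sphere hρ.le haC
  have hb2 := sq_sphere hρ.le hbC
  rw [ha0, ha1] at ha2
  rw [hb0, hb1] at hb2
  have key := key_scalar (o 0) (o 1) (o₀ 0) (o₀ 1) (v 0) (v 1) (x 0) (x 1) (y 0) (y 1)
    ρ ta tb tp lam hv01 (sub_ne_zero.mpr hab) hlam0 ha2 hb2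
    (sq_sphere hρ.le hxC) (sq_sphere hρ.le hyC) hl0 hl1
  simp only [Bf]
  rw [ha0, ha1, hb0, hb1]
  linear_combination key

/-- If the line through `a, b ∈ C` meets the consecutive sides of the cyclic quadrilateral
`xyzt` in points `p, q, r, s` inside the circle, then the segments `pq` and `rs` have equal
length in the Cayley–Klein model of the hyperbolic plane inside `C`:
`(1/2)·|log cr(a,b;p,q)| = (1/2)·|log cr(a,b;s,r)|`. -/
theorem cayleyKlein_equal_segments
    (o : E2) (ρ : ℝ) (hρ : 0 < ρ)
    (a b : E2) (hab : a ≠ b)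
    (haC : a ∈ sphere o ρ) (hbC : b ∈ sphere o ρ)
    (x y z t : E2)
    (hxC : x ∈ sphere o ρ) (hyC : y ∈ sphere o ρ)
    (hzC : z ∈ sphere o ρ) (htC : t ∈ sphere o ρ)
    (hxl : x ∉ affineSpan ℝ ({a, b} : Set E2))
    (hyl : y ∉ affineSpan ℝ ({a, b} : Set E2))
    (hzl : z ∉ affineSpan ℝ ({a, b} : Set E2))
    (htl : t ∉ affineSpan ℝ ({a, b} : Set E2))
    (p q r s : E2)
    (hpl : p ∈ affineSpan ℝ ({a, b} : Set E2))
    (hql : q ∈ affineSpan ℝ ({a, b} : Set E2))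
    (hrl : r ∈ affineSpan ℝ ({a, b} : Set E2))
    (hsl : s ∈ affineSpan ℝ ({a, b} : Set E2))
    -- `p, q, r, s` lie strictly inside the circle
    (hpin : dist p o < ρ) (hqin : dist q o < ρ)
    (hrin : dist r o < ρ) (hsin : dist s o < ρ)
    (hpxy : p ∈ affineSpan ℝ ({x, y} : Set E2))
    (hqyz : q ∈ affineSpan ℝ ({y, z} : Set E2))
    (hrzt : r ∈ affineSpan ℝ ({z, t} : Set E2))
    (hstx : s ∈ affineSpan ℝ ({t, x} : Set E2))
    -- a parametrization of the line through `a` and `b`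
    (o₀ v : E2) (hv : v ≠ 0)
    (ta tb tp tq tr ts : ℝ)
    (hta : a = o₀ + ta • v) (htb : b = o₀ + tb • v)
    (htp : p = o₀ + tp • v) (htq : q = o₀ + tq • v)
    (htr : r = o₀ + tr • v) (hts : s = o₀ + ts • v) :
    (1 / 2) * |Real.log (crossRatio ta tb tp tq)| =
      (1 / 2) * |Real.log (crossRatio ta tb ts tr)| := by
  have htab : ta ≠ tb := fun h => hab (by rw [hta, htb, h])
  -- the four chord relations
  have Ep := key_vec o hρ hv htab haC hbC hxC hyC hta htb htp hpxy hpin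
  have Eq' := key_vec o hρ hv htab haC hbC hyC hzC hta htb htq hqyz hqin
  have Er := key_vec o hρ hv htab haC hbC hzC htC hta htb htr hrzt hrin
  have Es := key_vec o hρ hv htab haC hbC htC hxC hta htb hts hstx hsin
  -- the relevant `Bf` values are nonzero
  have hxa : x ≠ a := fun h => hxl (by rw [h]; exact left_mem_affineSpan_pair ℝ a b)
  have hxb : x ≠ b := fun h => hxl (by rw [h]; exact right_mem_affineSpan_pair ℝ a b)
  have hya : y ≠ a := fun h => hyl (by rw [h]; exact left_mem_affineSpan_pair ℝ a b)
  have hyb : y ≠ b := fun h => hyl (by rw [h]; exact right_mem_affineSpan_pair ℝ a b)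
  have hza : z ≠ a := fun h => hzl (by rw [h]; exact left_mem_affineSpan_pair ℝ a b)
  have hzb : z ≠ b := fun h => hzl (by rw [h]; exact right_mem_affineSpan_pair ℝ a b)
  have hza' : t ≠ a := fun h => htl (by rw [h]; exact left_mem_affineSpan_pair ℝ a b)
  have hzb' : t ≠ b := fun h => htl (by rw [h]; exact right_mem_affineSpan_pair ℝ a b)
  have nBxa := Bf_ne hρ.le hxC haC hxa
  have nBya := Bf_ne hρ.le hyC haC hya
  have nByb := Bf_ne hρ.le hyC hbC hyb
  have nBzb := Bf_ne hρ.le hzC hbC hzb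
  have nBta := Bf_ne hρ.le htC haC hza'
  have nBtb := Bf_ne hρ.le htC hbC hzb'
  -- denominators are nonzero
  have dpb : tb - tp ≠ 0 := sub_ne_zero.mpr (param_ne hbC hpin htb htp).symm
  have dqa : ta - tq ≠ 0 := sub_ne_zero.mpr (param_ne haC hqin hta htq).symm
  have dsb : tb - ts ≠ 0 := sub_ne_zero.mpr (param_ne hbC hsin htb hts).symm
  have dra : ta - tr ≠ 0 := sub_ne_zero.mpr (param_ne haC hrin hta htr).symm
  -- equality of the squared cross-ratios
  have hPQ : (((ta - tp)^2*(tb - tq)^2) * (Bf o ρ x b * Bf o ρ z a)) * (Bf o ρ y a * Bf o ρ y b)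
      = (((tb - tp)^2*(ta - tq)^2) * (Bf o ρ x a * Bf o ρ z b)) * (Bf o ρ y a * Bf o ρ y b) := by
    linear_combination ((tb - tq)^2*(Bf o ρ z a)*(Bf o ρ y a))*Ep
      - ((tp - tb)^2*(Bf o ρ x a)*(Bf o ρ y a))*Eq'
  have hPQ' := mul_right_cancel₀ (mul_ne_zero nBya nByb) hPQ
  have hSR : (((ta - ts)^2*(tb - tr)^2) * (Bf o ρ x b * Bf o ρ z a)) * (Bf o ρ t a * Bf o ρ t b)
      = (((tb - ts)^2*(ta - tr)^2) * (Bf o ρ x a * Bf o ρ z b)) * (Bf o ρ t a * Bf o ρ t b) := by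
    linear_combination ((tb - tr)^2*(Bf o ρ z a)*(Bf o ρ t a))*Es
      - ((ts - tb)^2*(Bf o ρ t a)*(Bf o ρ x a))*Er
  have hSR' := mul_right_cancel₀ (mul_ne_zero nBta nBtb) hSR
  have hNDK : ((((ta - tp)^2*(tb - tq)^2) * ((tb - ts)^2*(ta - tr)^2))) * (Bf o ρ x a * Bf o ρ z b)
      = ((((ta - ts)^2*(tb - tr)^2) * ((tb - tp)^2*(ta - tq)^2))) * (Bf o ρ x a * Bf o ρ z b) := by
    linear_combination ((ta - ts)^2*(tb - tr)^2)*hPQ' - ((ta - tp)^2*(tb - tq)^2)*hSR'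
  have hND := mul_right_cancel₀ (mul_ne_zero nBxa nBzb) hNDK
  have hsq : (crossRatio ta tb tp tq)^2 = (crossRatio ta tb ts tr)^2 := by
    simp only [crossRatio]
    rw [div_mul_div_comm, div_mul_div_comm, div_pow, div_pow,
      div_eq_div_iff (pow_ne_zero 2 (mul_ne_zero dpb dqa)) (pow_ne_zero 2 (mul_ne_zero dsb dra))]
    linear_combination hND
  have habs : |crossRatio ta tb tp tq| = |crossRatio ta tb ts tr| := by
    rcases sq_eq_sq_iff_eq_or_eq_neg.mp hsq with h | h
    · rw [h]
    · rw [h, abs_neg]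
  rw [← Real.log_abs (crossRatio ta tb tp tq), ← Real.log_abs (crossRatio ta tb ts tr), habs]
end

section
/- Let n ≥ 1 and let p₁, …, pₙ be points of E, none lying on the circle C. If the composition I_{pₙ} ∘ ⋯ ∘ I_{p₁} : C → C has three pairwise distinct fixed points on C, then it is the identity map of C. (If Castillon's problem has at least three solutions, then every starting point on the circle gives a solution.) -/
open Metric

/-- Apply a list of maps in order: `chain [f₁, …, fₙ] x = fₙ (⋯ (f₁ x) ⋯)`,
i.e. the composition `fₙ ∘ ⋯ ∘ f₁` applied to `x`. -/
def chain (I : List (E2 → E2)) (x : E2) : E2 :=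
  I.foldl (fun y f => f y) x

namespace Castillon

def mk2 (x y : ℝ) : E2 := WithLp.toLp 2 ![x, y]

lemma e2_ext {x y : E2} (h0 : x 0 = y 0) (h1 : x 1 = y 1) : x = y := by
  ext i; fin_cases i <;> assumption

lemma sphere_iff (o : E2) (ρ : ℝ) (hρ : 0 ≤ ρ) (x : E2) :
    x ∈ sphere o ρ ↔ (x 0 - o 0)^2 + (x 1 - o 1)^2 = ρ^2 := by
  rw [mem_sphere, EuclideanSpace.dist_eq, Fin.sum_univ_two]
  constructor
  · intro h
    rw [← h, Real.sq_sqrt (by positivity)]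
    simp [Real.dist_eq, sq_abs]
  · intro h
    simp only [Real.dist_eq, sq_abs]
    rw [h, Real.sqrt_sq hρ]

lemma mem_line_iff (x p z : E2) :
    z ∈ affineSpan ℝ ({x, p} : Set E2) ↔ ∃ t : ℝ, z = x + t • (p - x) := by
  constructor
  · intro h
    have h2 : (z - x) +ᵥ x ∈ affineSpan ℝ ({x, p} : Set E2) := by
      simpa [vadd_eq_add, sub_add_cancel] using h
    rw [vadd_left_mem_affineSpan_pair] at h2
    obtain ⟨r, hr⟩ := h2
    rw [vsub_eq_sub] at hr
    exact ⟨r, by rw [hr]; abel⟩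
  · rintro ⟨t, rfl⟩
    have := smul_vsub_vadd_mem_affineSpan_pair (k := ℝ) t x p
    simpa [vsub_eq_sub, vadd_eq_add, add_comm] using this

/-- rational parametrization of the circle -/
noncomputable def Ψ (o : E2) (ρ : ℝ) (a b : ℝ) : E2 :=
  mk2 (o 0 + ρ * (b^2 - a^2) / (a^2 + b^2)) (o 1 + ρ * (2*a*b) / (a^2 + b^2))

lemma s_pos {a b : ℝ} (hab : ¬(a = 0 ∧ b = 0)) : 0 < a^2 + b^2 := by
  rcases not_and_or.mp hab with h | h
  · positivity
  · positivity

lemma Ψ_apply0 (o : E2) (ρ a b : ℝ) : Ψ o ρ a b 0 = o 0 + ρ * (b^2 - a^2) / (a^2 + b^2) := rfl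
lemma Ψ_apply1 (o : E2) (ρ a b : ℝ) : Ψ o ρ a b 1 = o 1 + ρ * (2*a*b) / (a^2 + b^2) := rfl

lemma Ψ_mem (o : E2) {ρ : ℝ} (hρ : 0 < ρ) {a b : ℝ} (hab : ¬(a = 0 ∧ b = 0)) :
    Ψ o ρ a b ∈ sphere o ρ := by
  rw [sphere_iff o ρ hρ.le, Ψ_apply0, Ψ_apply1]
  have hs := (s_pos hab).ne'
  field_simp
  ring

lemma Ψ_surj (o : E2) {ρ : ℝ} (hρ : 0 < ρ) {x : E2} (hx : x ∈ sphere o ρ) :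
    ∃ a b : ℝ, ¬(a = 0 ∧ b = 0) ∧ Ψ o ρ a b = x := by
  rw [sphere_iff o ρ hρ.le] at hx
  by_cases hb : ρ + (x 0 - o 0) = 0
  · refine ⟨1, 0, by simp, ?_⟩
    have hx0 : x 0 = o 0 - ρ := by linarith
    have hx1 : x 1 = o 1 := by nlinarith
    refine e2_ext ?_ ?_
    · rw [Ψ_apply0, hx0]; norm_num; ring
    · rw [Ψ_apply1, hx1]; norm_num
  · refine ⟨x 1 - o 1, ρ + (x 0 - o 0), fun h => hb h.2, ?_⟩
    have hs : (x 1 - o 1)^2 + (ρ + (x 0 - o 0))^2 ≠ 0 := (s_pos (fun h => hb h.2)).ne'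
    refine e2_ext ?_ ?_
    · have key : ρ * ((ρ + (x 0 - o 0))^2 - (x 1 - o 1)^2) / ((x 1 - o 1)^2 + (ρ + (x 0 - o 0))^2)
          = x 0 - o 0 := by
        rw [div_eq_iff hs]
        linear_combination (-(ρ + (x 0 - o 0))) * hx
      rw [Ψ_apply0]; linarith [key]
    · have key : ρ * (2 * (x 1 - o 1) * (ρ + (x 0 - o 0))) / ((x 1 - o 1)^2 + (ρ + (x 0 - o 0))^2)
          = x 1 - o 1 := by
        rw [div_eq_iff hs]
        linear_combination (-(x 1 - o 1)) * hx
      rw [Ψ_apply1]; linarith [key]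

/-- near-injectivity of Ψ -/
lemma Ψ_inj (o : E2) {ρ : ℝ} (hρ : 0 < ρ) {a b c d : ℝ}
    (hab : ¬(a = 0 ∧ b = 0)) (hcd : ¬(c = 0 ∧ d = 0))
    (h : Ψ o ρ a b = Ψ o ρ c d) : a * d = b * c := by
  have hs := (s_pos hab).ne'
  have ht := (s_pos hcd).ne'
  have h0 := congrFun (congrArg WithLp.ofLp h) 0
  have h1 := congrFun (congrArg WithLp.ofLp h) 1
  simp only [Ψ_apply0, Ψ_apply1] at h0 h1
  have e0' : ρ * (b^2 - a^2) / (a^2 + b^2) = ρ * (d^2 - c^2) / (c^2 + d^2) := by linarith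
  have e1' : ρ * (2*a*b) / (a^2 + b^2) = ρ * (2*c*d) / (c^2 + d^2) := by linarith
  rw [div_eq_div_iff hs ht] at e0' e1'
  have e0 : (b^2 - a^2) * (c^2 + d^2) = (d^2 - c^2) * (a^2 + b^2) :=
    mul_left_cancel₀ hρ.ne' (by linear_combination e0')
  have e1 : (2*a*b) * (c^2 + d^2) = (2*c*d) * (a^2 + b^2) :=
    mul_left_cancel₀ hρ.ne' (by linear_combination e1')
  by_contra hne
  have key1 : (a*d - b*c) * (a*d + b*c) = 0 := by linear_combination (-(1:ℝ)/2) * e0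
  have key2 : (a*d - b*c) * (b*d - a*c) = 0 := by linear_combination ((1:ℝ)/2) * e1
  have hne' : a*d - b*c ≠ 0 := fun h' => hne (by linarith)
  have k1 : a*d + b*c = 0 := by
    rcases mul_eq_zero.mp key1 with h' | h'
    · exact absurd h' hne'
    · exact h'
  have k2 : b*d - a*c = 0 := by
    rcases mul_eq_zero.mp key2 with h' | h'
    · exact absurd h' hne'
    · exact h'
  have hc : c = 0 := by
    have : (a^2 + b^2) * c = a * -(b*d - a*c) + b * (a*d + b*c) := by ring
    rw [k1, k2] at this
    simpa using (mul_eq_zero.mp (by linarith [this]) ).resolve_left (s_pos hab).ne'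
  have hd : d = 0 := by
    have : (a^2 + b^2) * d = a * (a*d + b*c) - b * -(b*d - a*c) := by ring
    rw [k1, k2] at this
    simpa using (mul_eq_zero.mp (by linarith [this])).resolve_left (s_pos hab).ne'
  exact hcd ⟨hc, hd⟩

/-- well-definedness up to scalar -/
lemma Ψ_welldef (o : E2) (ρ : ℝ) {a b c d : ℝ}
    (hab : ¬(a = 0 ∧ b = 0)) (hcd : ¬(c = 0 ∧ d = 0))
    (h : a * d = b * c) : Ψ o ρ a b = Ψ o ρ c d := by
  have hs := (s_pos hab).ne'
  have ht := (s_pos hcd).ne'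
  refine e2_ext ?_ ?_
  · rw [Ψ_apply0, Ψ_apply0]
    congr 1
    rw [div_eq_div_iff hs ht]
    linear_combination (-2*ρ*(a*d + b*c)) * h
  · rw [Ψ_apply1, Ψ_apply1]
    congr 1
    rw [div_eq_div_iff hs ht]
    linear_combination (2*ρ*(b*d - a*c)) * h


lemma collinear_param {Δ0 Δ1 W0 W1 : ℝ} (h : W0*Δ1 - W1*Δ0 = 0) (hΔ : ¬(Δ0 = 0 ∧ Δ1 = 0)) :
    ∃ t : ℝ, W0 = t*Δ0 ∧ W1 = t*Δ1 := by
  by_cases h0 : Δ0 = 0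
  · have h1 : Δ1 ≠ 0 := fun h1 => hΔ ⟨h0, h1⟩
    refine ⟨W1/Δ1, ?_, by field_simp⟩
    rw [h0] at h ⊢
    have : W0 = 0 := by
      have := mul_eq_zero.mp (by linarith : W0 * Δ1 = 0)
      tauto
    rw [this]; ring
  · refine ⟨W0/Δ0, by field_simp, ?_⟩
    rw [div_mul_eq_mul_div, eq_div_iff h0]
    linarith [h]

lemma div_helper2 (w z s : ℝ) (hs : s ≠ 0) : (w - z/s)*s = w*s - z := by
  rw [sub_mul, div_mul_cancel₀ _ hs]

lemma div_helper1 (w z s : ℝ) (hs : s ≠ 0) : (w - z/s)*(z/s)*s^2 = (w*s - z)*z := by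
  have h : (w - z/s)*(z/s)*s^2 = ((w - z/s)*s)*((z/s)*s) := by ring
  rw [h, div_helper2 w z s hs, div_mul_cancel₀ _ hs]

lemma div_helper3 (y z S s : ℝ) (hS : S ≠ 0) (hs : s ≠ 0) :
    (y/S - z/s)*(S*s) = y*s - z*S := by
  field_simp

lemma chord_rep (o : E2) {ρ : ℝ} (hρ : 0 < ρ) {p : E2} (hp : p ∉ sphere o ρ)
    {I : E2 → E2} (hI : ChordMap o ρ p I) {a b : ℝ} (hab : ¬(a = 0 ∧ b = 0)) :
    ¬((-(p 1 - o 1))*a + (ρ - (p 0 - o 0))*b = 0 ∧ (-(ρ + (p 0 - o 0)))*a + (p 1 - o 1)*b = 0) ∧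
    I (Ψ o ρ a b) =
      Ψ o ρ ((-(p 1 - o 1))*a + (ρ - (p 0 - o 0))*b) ((-(ρ + (p 0 - o 0)))*a + (p 1 - o 1)*b) := by
  have hs : a^2 + b^2 ≠ 0 := (s_pos hab).ne'
  set u : ℝ := p 0 - o 0 with hu
  set v : ℝ := p 1 - o 1 with hv
  have hps : u^2 + v^2 ≠ ρ^2 := by
    rw [sphere_iff o ρ hρ.le] at hp
    exact fun h => hp h
  have hdet : ρ^2 - u^2 - v^2 ≠ 0 := fun h => hps (by linarith)
  set c : ℝ := (-v)*a + (ρ - u)*b with hc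
  set d : ℝ := (-(ρ + u))*a + v*b with hd
  have hcd : ¬(c = 0 ∧ d = 0) := by
    rintro ⟨hc0, hd0⟩
    have ha0 : (ρ^2 - u^2 - v^2) * a = v*c - (ρ-u)*d := by rw [hc, hd]; ring
    have hb0 : (ρ^2 - u^2 - v^2) * b = (ρ+u)*c - v*d := by rw [hc, hd]; ring
    rw [hc0, hd0] at ha0 hb0
    simp only [mul_zero, sub_zero, zero_sub, mul_eq_zero] at ha0 hb0
    refine hab ⟨?_, ?_⟩
    · rcases ha0 with h | h
      · exact absurd h hdet
      · exact h
    · rcases hb0 with h | h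
      · exact absurd h hdet
      · exact h
  have hS : c^2 + d^2 ≠ 0 := (s_pos hcd).ne'
  refine ⟨fun h => hcd ⟨by rw [hc]; exact h.1, by rw [hd]; exact h.2⟩, ?_⟩
  set x := Ψ o ρ a b with hxdef
  have hx : x ∈ sphere o ρ := Ψ_mem o hρ hab
  set X0 : ℝ := ρ * (b^2 - a^2) / (a^2 + b^2) with hX0
  set X1 : ℝ := ρ * (2*a*b) / (a^2 + b^2) with hX1
  set Y0 : ℝ := ρ * (d^2 - c^2) / (c^2 + d^2) with hY0
  set Y1 : ℝ := ρ * (2*c*d) / (c^2 + d^2) with hY1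
  have hx0 : x 0 = o 0 + X0 := rfl
  have hx1 : x 1 = o 1 + X1 := rfl
  have hy0 : Ψ o ρ c d 0 = o 0 + Y0 := rfl
  have hy1 : Ψ o ρ c d 1 = o 1 + Y1 := rfl
  clear_value u v c d x X0 X1 Y0 Y1
  have hxs : X0^2 + X1^2 = ρ^2 := by
    have := (sphere_iff o ρ hρ.le x).mp hx
    rw [hx0, hx1] at this
    linarith [this]
  have hp0 : p 0 = o 0 + u := by rw [hu]; ring
  have hp1 : p 1 = o 1 + v := by rw [hv]; ring
  have hpx : ¬(u - X0 = 0 ∧ v - X1 = 0) := by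
    rintro ⟨h0, h1⟩
    apply hps
    have e0 : u = X0 := by linarith
    have e1 : v = X1 := by linarith
    rw [e0, e1]; exact hxs
  set N : ℝ := (u - X0)^2 + (v - X1)^2 with hN
  have hN0 : N ≠ 0 := (s_pos hpx).ne'
  clear_value N
  set ip : ℝ := (u - X0)*X0 + (v - X1)*X1 with hip
  clear_value ip
  -- the collinearity determinant vanishes
  have hdet2 : (Y0 - X0)*(v - X1) - (Y1 - X1)*(u - X0) = 0 := by
    have e0 : (Y0 - X0) * ((c^2+d^2)*(a^2+b^2)) =
        ρ*(d^2-c^2)*(a^2+b^2) - ρ*(b^2-a^2)*(c^2+d^2) := by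
      rw [hY0, hX0]; exact div_helper3 _ _ _ _ hS hs
    have e1 : (Y1 - X1) * ((c^2+d^2)*(a^2+b^2)) =
        ρ*(2*c*d)*(a^2+b^2) - ρ*(2*a*b)*(c^2+d^2) := by
      rw [hY1, hX1]; exact div_helper3 _ _ _ _ hS hs
    have f0 : (u - X0) * (a^2+b^2) = u*(a^2+b^2) - ρ*(b^2-a^2) := by
      rw [hX0]; exact div_helper2 _ _ _ hs
    have f1 : (v - X1) * (a^2+b^2) = v*(a^2+b^2) - ρ*(2*a*b) := by
      rw [hX1]; exact div_helper2 _ _ _ hs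
    have key : ((Y0 - X0)*(v - X1) - (Y1 - X1)*(u - X0)) * ((c^2+d^2)*(a^2+b^2)^2) = 0 := by
      have expand : ((Y0 - X0)*(v - X1) - (Y1 - X1)*(u - X0)) * ((c^2+d^2)*(a^2+b^2)^2) =
          ((Y0 - X0) * ((c^2+d^2)*(a^2+b^2))) * ((v - X1) * (a^2+b^2)) -
          ((Y1 - X1) * ((c^2+d^2)*(a^2+b^2))) * ((u - X0) * (a^2+b^2)) := by ring
      rw [expand, e0, e1, f0, f1, hc, hd]
      ring
    rcases mul_eq_zero.mp key with h | h
    · exact h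
    · exact absurd h (by positivity)
  -- ip in terms of the cross product
  have hipcross : ip * (a^2 + b^2) = ρ * (a*d - b*c) := by
    have e0 : (u - X0) * X0 * (a^2+b^2)^2 =
        (u*(a^2+b^2) - ρ*(b^2-a^2)) * (ρ*(b^2-a^2)) := by
      rw [hX0]; exact div_helper1 _ _ _ hs
    have e1 : (v - X1) * X1 * (a^2+b^2)^2 =
        (v*(a^2+b^2) - ρ*(2*a*b)) * (ρ*(2*a*b)) := by
      rw [hX1]; exact div_helper1 _ _ _ hs
    have key : ip * (a^2+b^2) * (a^2+b^2)^2 = ρ * (a*d - b*c) * (a^2+b^2)^2 := by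
      have expand : ip * (a^2+b^2) * (a^2+b^2)^2 =
          ((u - X0) * X0 * (a^2+b^2)^2 + (v - X1) * X1 * (a^2+b^2)^2) * (a^2+b^2) := by
        rw [hip]; ring
      rw [expand, e0, e1, hc, hd]
      ring
    exact mul_right_cancel₀ (by positivity) key
  obtain ⟨ty, hty0, hty1⟩ := collinear_param hdet2 hpx
  have hy_eq : Ψ o ρ c d = x + ty • (p - x) := by
    refine e2_ext ?_ ?_
    · show Ψ o ρ c d 0 = x 0 + ty * (p 0 - x 0)
      rw [hy0, hx0, hp0]
      have : Y0 = X0 + ty * (u - X0) := by linarith [hty0]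
      rw [this]; ring
    · show Ψ o ρ c d 1 = x 1 + ty * (p 1 - x 1)
      rw [hy1, hx1, hp1]
      have : Y1 = X1 + ty * (v - X1) := by linarith [hty1]
      rw [this]; ring
  have claimB : ∀ t : ℝ, (X0 + t*(u - X0))^2 + (X1 + t*(v - X1))^2 = ρ^2 →
      t * (t * N + 2 * ip) = 0 := by
    intro t h
    rw [hN, hip]
    linear_combination h - hxs
  have quad_y : ty * (ty * N + 2 * ip) = 0 := by
    apply claimB
    have := (sphere_iff o ρ hρ.le _).mp (Ψ_mem o hρ hcd)
    rw [hy0, hy1] at this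
    have e0 : Y0 = X0 + ty * (u - X0) := by linarith [hty0]
    have e1 : Y1 = X1 + ty * (v - X1) := by linarith [hty1]
    rw [← e0, ← e1]
    linarith [this]
  -- claim U : every point of sphere ∩ line is x or Ψ c d
  have claimU : ∀ z ∈ sphere o ρ, z ∈ affineSpan ℝ ({x, p} : Set E2) →
      z = x ∨ z = Ψ o ρ c d := by
    intro z hz hzl
    obtain ⟨t, rfl⟩ := (mem_line_iff x p z).mp hzl
    have hzs := (sphere_iff o ρ hρ.le _).mp hz
    have hz0 : (x + t • (p - x)) 0 = o 0 + (X0 + t * (u - X0)) := by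
      show x 0 + t * (p 0 - x 0) = _
      rw [hx0, hp0]; ring
    have hz1 : (x + t • (p - x)) 1 = o 1 + (X1 + t * (v - X1)) := by
      show x 1 + t * (p 1 - x 1) = _
      rw [hx1, hp1]; ring
    rw [hz0, hz1] at hzs
    have quad_z : t * (t * N + 2 * ip) = 0 := claimB t (by linarith [hzs])
    by_cases ht0 : t = 0
    · left; rw [ht0]; simp
    · right
      have h : t * N + 2 * ip = 0 := (mul_eq_zero.mp quad_z).resolve_left ht0
      by_cases hty : ty = 0
      · -- tangent case : Ψ c d = x, hence ip = 0, so t * N = 0, contradiction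
        exfalso
        have hyx : Ψ o ρ c d = x := by
          rw [hy_eq, hty]; simp
        have hadbc : c * b = d * a := Ψ_inj o hρ hcd hab (by rw [hyx]; exact hxdef)
        have hip0 : ip = 0 := by
          have : ip * (a^2 + b^2) = 0 := by rw [hipcross]; linear_combination (-ρ) * hadbc
          exact (mul_eq_zero.mp this).resolve_right hs
        rw [hip0] at h
        rcases mul_eq_zero.mp (by linarith : t * N = 0) with h' | h'
        · exact ht0 h'
        · exact hN0 h'
      · -- ty ≠ 0 : then ty * N + 2 ip = 0, so t = ty
        have hqy : ty * N + 2 * ip = 0 := by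
          rcases mul_eq_zero.mp quad_y with h' | h'
          · exact absurd h' hty
          · exact h'
        have : t = ty := by
          have : (t - ty) * N = 0 := by linarith [h, hqy]
          rcases mul_eq_zero.mp this with h' | h'
          · linarith
          · exact absurd h' hN0
        rw [this, hy_eq]
  obtain ⟨hIs, hIl, hIu⟩ := hI x hx
  have hyl : Ψ o ρ c d ∈ affineSpan ℝ ({x, p} : Set E2) :=
    (mem_line_iff x p _).mpr ⟨ty, hy_eq⟩
  rcases hIu (Ψ o ρ c d) (Ψ_mem o hρ hcd) hyl with h | h
  · rcases claimU (I x) hIs hIl with h2 | h2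
    · rw [h2, ← h]
    · exact h2
  · exact h.symm


/-- `f` is represented on the circle by the 2x2 matrix `m = (m00, m01, m10, m11)`. -/
def Rep (o : E2) (ρ : ℝ) (f : E2 → E2) (m : ℝ × ℝ × ℝ × ℝ) : Prop :=
  ∀ a b : ℝ, ¬(a = 0 ∧ b = 0) →
    ¬(m.1*a + m.2.1*b = 0 ∧ m.2.2.1*a + m.2.2.2*b = 0) ∧
    f (Ψ o ρ a b) = Ψ o ρ (m.1*a + m.2.1*b) (m.2.2.1*a + m.2.2.2*b)

lemma chord_rep' (o : E2) {ρ : ℝ} (hρ : 0 < ρ) {p : E2} (hp : p ∉ sphere o ρ)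
    {I : E2 → E2} (hI : ChordMap o ρ p I) :
    Rep o ρ I (-(p 1 - o 1), ρ - (p 0 - o 0), -(ρ + (p 0 - o 0)), p 1 - o 1) :=
  fun _ _ hab => chord_rep o hρ hp hI hab

lemma chain_nil (x : E2) : chain [] x = x := rfl

lemma chain_cons (f : E2 → E2) (l : List (E2 → E2)) (x : E2) :
    chain (f :: l) x = chain l (f x) := rfl

lemma chain_rep (o : E2) (ρ : ℝ) (l : List (E2 → E2))
    (h : ∀ f ∈ l, ∃ m, Rep o ρ f m) : ∃ m, Rep o ρ (chain l) m := by
  induction l with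
  | nil =>
    refine ⟨(1, 0, 0, 1), fun a b hab => ⟨?_, ?_⟩⟩
    · intro hcon
      norm_num at hcon
      exact hab hcon
    · show Ψ o ρ a b = _
      norm_num
  | cons f l ih =>
    obtain ⟨mf, hmf⟩ := h f List.mem_cons_self
    obtain ⟨ml, hml⟩ := ih (fun g hg => h g (List.mem_cons_of_mem f hg))
    refine ⟨(ml.1*mf.1 + ml.2.1*mf.2.2.1, ml.1*mf.2.1 + ml.2.1*mf.2.2.2,
             ml.2.2.1*mf.1 + ml.2.2.2*mf.2.2.1, ml.2.2.1*mf.2.1 + ml.2.2.2*mf.2.2.2), ?_⟩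
    intro a b hab
    obtain ⟨hnz, heq⟩ := hmf a b hab
    obtain ⟨hnz2, heq2⟩ := hml _ _ hnz
    have k1 : ml.1*(mf.1*a + mf.2.1*b) + ml.2.1*(mf.2.2.1*a + mf.2.2.2*b)
        = (ml.1*mf.1 + ml.2.1*mf.2.2.1)*a + (ml.1*mf.2.1 + ml.2.1*mf.2.2.2)*b := by ring
    have k2 : ml.2.2.1*(mf.1*a + mf.2.1*b) + ml.2.2.2*(mf.2.2.1*a + mf.2.2.2*b)
        = (ml.2.2.1*mf.1 + ml.2.2.2*mf.2.2.1)*a + (ml.2.2.1*mf.2.1 + ml.2.2.2*mf.2.2.2)*b := by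
      ring
    constructor
    · intro hcon
      exact hnz2 ⟨by rw [k1]; exact hcon.1, by rw [k2]; exact hcon.2⟩
    · rw [chain_cons, heq, heq2, k1, k2]

lemma quad_zero (A B C a1 b1 a2 b2 a3 b3 : ℝ)
    (h1 : A*a1^2 + B*(a1*b1) + C*b1^2 = 0)
    (h2 : A*a2^2 + B*(a2*b2) + C*b2^2 = 0)
    (h3 : A*a3^2 + B*(a3*b3) + C*b3^2 = 0)
    (d12 : a1*b2 - a2*b1 ≠ 0) (d13 : a1*b3 - a3*b1 ≠ 0) (d23 : a2*b3 - a3*b2 ≠ 0) :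
    A = 0 ∧ B = 0 ∧ C = 0 := by
  have hD : (a1*b2 - a2*b1)*((a1*b3 - a3*b1)*(a2*b3 - a3*b2)) ≠ 0 :=
    mul_ne_zero d12 (mul_ne_zero d13 d23)
  refine ⟨?_, ?_, ?_⟩
  · have key : A * ((a1*b2 - a2*b1)*((a1*b3 - a3*b1)*(a2*b3 - a3*b2))) = 0 := by
      linear_combination (b2*b3*(a2*b3-a3*b2))*h1 - (b1*b3*(a1*b3-a3*b1))*h2 +
        (b1*b2*(a1*b2-a2*b1))*h3
    exact (mul_eq_zero.mp key).resolve_right hD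
  · have key : B * ((a1*b2 - a2*b1)*((a1*b3 - a3*b1)*(a2*b3 - a3*b2))) = 0 := by
      linear_combination (-(a2*b3+a3*b2)*(a2*b3-a3*b2))*h1 + ((a1*b3+a3*b1)*(a1*b3-a3*b1))*h2 -
        ((a1*b2+a2*b1)*(a1*b2-a2*b1))*h3
    exact (mul_eq_zero.mp key).resolve_right hD
  · have key : C * ((a1*b2 - a2*b1)*((a1*b3 - a3*b1)*(a2*b3 - a3*b2))) = 0 := by
      linear_combination (a2*a3*(a2*b3-a3*b2))*h1 - (a1*a3*(a1*b3-a3*b1))*h2 +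
        (a1*a2*(a1*b2-a2*b1))*h3
    exact (mul_eq_zero.mp key).resolve_right hD

end Castillon

/-- If Castillon's problem for points `p₁, …, pₙ` has at least three solutions, i.e. the
composition `I_{pₙ} ∘ ⋯ ∘ I_{p₁}` has three pairwise distinct fixed points on the circle,
then this composition is the identity map of the circle. -/
theorem castillon_three_solutions
    (o : E2) (ρ : ℝ) (hρ : 0 < ρ)
    (n : ℕ) (hn : 1 ≤ n)
    (p : Fin n → E2) (hpC : ∀ i, p i ∉ sphere o ρ)
    (I : Fin n → E2 → E2) (hI : ∀ i, ChordMap o ρ (p i) (I i))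
    (x₁ x₂ x₃ : E2)
    (hx₁ : x₁ ∈ sphere o ρ) (hx₂ : x₂ ∈ sphere o ρ) (hx₃ : x₃ ∈ sphere o ρ)
    (h12 : x₁ ≠ x₂) (h13 : x₁ ≠ x₃) (h23 : x₂ ≠ x₃)
    (hf₁ : chain (List.ofFn I) x₁ = x₁)
    (hf₂ : chain (List.ofFn I) x₂ = x₂)
    (hf₃ : chain (List.ofFn I) x₃ = x₃) :
    ∀ y ∈ sphere o ρ, chain (List.ofFn I) y = y := by
  classical
  open Castillon in
  obtain ⟨m, hm⟩ := Castillon.chain_rep o ρ (List.ofFn I) (by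
    intro f hf
    rw [List.mem_ofFn] at hf
    obtain ⟨i, rfl⟩ := hf
    exact ⟨_, Castillon.chord_rep' o hρ (hpC i) (hI i)⟩)
  obtain ⟨a1, b1, hw1, hΨ1⟩ := Castillon.Ψ_surj o hρ hx₁
  obtain ⟨a2, b2, hw2, hΨ2⟩ := Castillon.Ψ_surj o hρ hx₂
  obtain ⟨a3, b3, hw3, hΨ3⟩ := Castillon.Ψ_surj o hρ hx₃
  -- cross-product conditions from the fixed points
  have fixcross : ∀ a b : ℝ, ¬(a = 0 ∧ b = 0) → chain (List.ofFn I) (Castillon.Ψ o ρ a b) =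
      Castillon.Ψ o ρ a b →
      (-(m.2.2.1))*a^2 + (m.1 - m.2.2.2)*(a*b) + m.2.1*b^2 = 0 := by
    intro a b hab hfix
    obtain ⟨hnz, heq⟩ := hm a b hab
    rw [heq] at hfix
    have := Castillon.Ψ_inj o hρ hnz hab hfix
    linear_combination this
  have q1 := fixcross a1 b1 hw1 (by rw [hΨ1]; exact hf₁)
  have q2 := fixcross a2 b2 hw2 (by rw [hΨ2]; exact hf₂)
  have q3 := fixcross a3 b3 hw3 (by rw [hΨ3]; exact hf₃)
  -- pairwise independence
  have indep : ∀ (a b c d : ℝ), ¬(a = 0 ∧ b = 0) → ¬(c = 0 ∧ d = 0) →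
      Castillon.Ψ o ρ a b ≠ Castillon.Ψ o ρ c d → a*d - c*b ≠ 0 := by
    intro a b c d hab hcd hne h0
    exact hne (Castillon.Ψ_welldef o ρ hab hcd (by linarith))
  have d12 : a1*b2 - a2*b1 ≠ 0 :=
    indep a1 b1 a2 b2 hw1 hw2 (by rw [hΨ1, hΨ2]; exact h12)
  have d13 : a1*b3 - a3*b1 ≠ 0 :=
    indep a1 b1 a3 b3 hw1 hw3 (by rw [hΨ1, hΨ3]; exact h13)
  have d23 : a2*b3 - a3*b2 ≠ 0 :=
    indep a2 b2 a3 b3 hw2 hw3 (by rw [hΨ2, hΨ3]; exact h23)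
  obtain ⟨hA, hB, hC⟩ := Castillon.quad_zero _ _ _ _ _ _ _ _ _ q1 q2 q3 d12 d13 d23
  -- conclusion
  intro y hy
  obtain ⟨a, b, hab, hΨ⟩ := Castillon.Ψ_surj o hρ hy
  obtain ⟨hnz, heq⟩ := hm a b hab
  rw [← hΨ, heq]
  apply Castillon.Ψ_welldef o ρ hnz hab
  linear_combination a^2*hA + (a*b)*hB + b^2*hC
end
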